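/- arXiv:1407.1200 — 6 statements merged into one kernel-verified Lean document; each statement's English description precedes it below -/
import Mathlib

section
/- For all (u₁,…,u_d) ∈ [0,1]^d, the multilinear extension copula satisfies C^⊞(u₁,…,u_d) = ∑_{S ⊆ {1,…,d}} λ_{H,S}(u₁,…,u_d) · H(F₁⁻¹(u_{S₁}),…,F_d⁻¹(u_{S_d})). In particular, for every S ⊆ {1,…,d} and every (u₁,…,u_d) ∈ [0,1]^d, C^⊞(u_{S₁},…,u_{S_d}) = H(F₁⁻¹(u_{S₁}),…,F_d⁻¹(u_{S_d})). -/
/-!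
Because `H` is constant on the unit boxes `⌊x⌋ + [0,1)^d`, `H^⊞(x)` is the multilinear
interpolation of `H` between the lattice points `⌊x⌋` and `⌊x⌋ + 1` with weights `fract x`;
in dimension one, `F_j^⊞` is the piecewise-linear interpolation of `F_j` through the integers.
If `F_j(m) < u_j ≤ F_j(m + 1)`, then `u_j⁺ = F_j(m + 1)`, `u_j⁻ = F_j(m)` (when `u_j` is not
itself a value of `F_j`) and `F_j^⊞⁻¹(u_j) = m + λ_{F_j}(u_j)`. Since `H` depends on its
`j`-th argument only through `F_j`, the interpolation between `m` and `m + 1` in coordinate `j`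
may be replaced by the one between `F_j⁻¹(u_j⁻)` and `F_j⁻¹(u_j⁺)`, and multilinearity
carries this out one coordinate at a time. At the points `u_S` all weights `λ` equal `1`.
-/

open MeasureTheory Filter Topology

noncomputable section

/-- Generalized inverse `F⁻¹(u) = inf {x | F x ≥ u}` of a distribution function,
with the convention `F⁻¹ 0 = -1`. -/
def genInv (F : ℝ → ℝ) (u : ℝ) : ℝ :=
  if u = 0 then -1 else sInf {x : ℝ | u ≤ F x}

/-- Multilinear extension `F^⊞(x) = ∫₀¹ F (x + u) du` of a univariate distribution function. -/
def mlin1 (F : ℝ → ℝ) (x : ℝ) : ℝ := ∫ u in Set.Icc (0:ℝ) 1, F (x + u)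

/-- Multilinear extension `H^⊞(x) = ∫_{[0,1]^d} H (x + u) du` of a `d`-variate
distribution function. -/
def mlin (d : ℕ) (H : (Fin d → ℝ) → ℝ) (x : Fin d → ℝ) : ℝ :=
  ∫ u in Set.Icc (0 : Fin d → ℝ) 1, H (x + u)

/-- The multilinear extension copula `C^⊞(u) = H^⊞(F₁^⊞⁻¹(u₁),…,F_d^⊞⁻¹(u_d))`
of `H` with margins `F`. -/
def mlinCopula (d : ℕ) (H : (Fin d → ℝ) → ℝ) (F : Fin d → ℝ → ℝ) (u : Fin d → ℝ) : ℝ :=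
  mlin d H (fun j => genInv (mlin1 (F j)) (u j))

/-- The closed range `ℛ = {0,1} ∪ {F(k) : k ∈ ℕ}` of the distribution function `F`. -/
def clRange (F : ℝ → ℝ) : Set ℝ := {0, 1} ∪ {r : ℝ | ∃ k : ℕ, F k = r}

/-- `u⁻`, the greatest element `r` of the closed range with `r ≤ u`. -/
def uMinus (F : ℝ → ℝ) (u : ℝ) : ℝ := sSup {r ∈ clRange F | r ≤ u}

/-- `u⁺`, the least element `r` of the closed range with `u ≤ r`. -/
def uPlus (F : ℝ → ℝ) (u : ℝ) : ℝ := sInf {r ∈ clRange F | u ≤ r}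

/-- The interpolation weight `λ_F(u)`. -/
def lam (F : ℝ → ℝ) (u : ℝ) : ℝ :=
  if uMinus F u = uPlus F u then 1
  else (u - uMinus F u) / (uPlus F u - uMinus F u)

/-- The weight `λ_{H,S}(u₁,…,u_d)`; it depends on `H` only through its margins `F`. -/
def lamS (d : ℕ) (F : Fin d → ℝ → ℝ) (S : Finset (Fin d)) (u : Fin d → ℝ) : ℝ :=
  (∏ j ∈ S, lam (F j) (u j)) * ∏ j ∈ Sᶜ, (1 - lam (F j) (u j))

/-- The point `(u_{S₁},…,u_{S_d})`: `u_{S_j} = u_j⁺` if `j ∈ S`, else `u_j⁻`. -/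
def uSel (d : ℕ) (F : Fin d → ℝ → ℝ) (S : Finset (Fin d)) (u : Fin d → ℝ) : Fin d → ℝ :=
  fun j => if j ∈ S then uPlus (F j) (u j) else uMinus (F j) (u j)

open Function

section MultilinInterp

variable {ι : Type*} [DecidableEq ι]

/-- The expectation of `G` at the random point whose coordinates `j ∈ A` are independently `b j`
with probability `p j` and `a j` otherwise, and whose coordinates `j ∉ A` are `z j`. -/
def multilinInterp (A : Finset ι) (p a b z : ι → ℝ) (G : (ι → ℝ) → ℝ) : ℝ :=
  ∑ S ∈ A.powerset,
    (∏ j ∈ S, p j) * (∏ j ∈ A \ S, (1 - p j)) * G (S.piecewise b (A.piecewise a z))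

theorem multilinInterp_insert {A : Finset ι} {i : ι} (hi : i ∉ A) (p a b z : ι → ℝ)
    (G : (ι → ℝ) → ℝ) :
    multilinInterp (insert i A) p a b z G = multilinInterp A p a b z
      fun y => (1 - p i) * G (update y i (a i)) + p i * G (update y i (b i)) := by
  rw [multilinInterp, Finset.sum_powerset_insert hi, ← Finset.sum_add_distrib, multilinInterp]
  refine Finset.sum_congr rfl fun S hS => ?_
  have hiS : i ∉ S := fun h => hi (Finset.mem_powerset.mp hS h)
  rw [Finset.piecewise_insert, Finset.piecewise_insert,
    ← Finset.update_piecewise_of_notMem _ _ _ hiS, update_idem, Finset.prod_insert hiS,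
    Finset.insert_sdiff_insert, Finset.sdiff_insert_of_notMem hi,
    Finset.insert_sdiff_of_notMem _ hiS, Finset.prod_insert fun h => hi (Finset.mem_sdiff.mp h).1]
  ring

theorem multilinInterp_congr {A : Finset ι} {p a b q c e : ι → ℝ} (z : ι → ℝ)
    {G : (ι → ℝ) → ℝ}
    (h : ∀ i ∈ A, ∀ y, (1 - p i) * G (update y i (a i)) + p i * G (update y i (b i))
      = (1 - q i) * G (update y i (c i)) + q i * G (update y i (e i))) :
    multilinInterp A p a b z G = multilinInterp A q c e z G := by
  induction A using Finset.induction_on generalizing G with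
  | empty => simp [multilinInterp]
  | insert i A hi ih =>
    rw [multilinInterp_insert hi, multilinInterp_insert hi,
      funext (h i (Finset.mem_insert_self i A))]
    refine ih fun k hk y => ?_
    have hki : k ≠ i := fun hki => hi (hki ▸ hk)
    simp only [update_comm hki]
    linear_combination (1 - q i) * h k (Finset.mem_insert_of_mem hk) (update y i (c i))
      + q i * h k (Finset.mem_insert_of_mem hk) (update y i (e i))

theorem multilinInterp_one (A : Finset ι) (a b z : ι → ℝ) (G : (ι → ℝ) → ℝ) :
    multilinInterp A 1 a b z G = G (A.piecewise b z) := by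
  rw [multilinInterp, Finset.sum_eq_single A]
  · simp
  · intro S hS hSA
    obtain ⟨j, hjA, hjS⟩ := Finset.exists_of_ssubset
      (Finset.ssubset_iff_subset_ne.mpr ⟨Finset.mem_powerset.mp hS, hSA⟩)
    rw [Finset.prod_eq_zero (Finset.mem_sdiff.mpr ⟨hjA, hjS⟩) (sub_self _), mul_zero, zero_mul]
  · exact fun h => absurd (Finset.mem_powerset_self A) h

end MultilinInterp

theorem setIntegral_comp_fintype {α ι : Type*} [MeasurableSpace α] {μ : Measure α}
    [Fintype ι] {s : Set α} (hμs : μ s ≠ ⊤) (g : α → ι)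
    (hg : ∀ i, MeasurableSet (s ∩ g ⁻¹' {i})) (c : ι → ℝ) :
    ∫ x in s, c (g x) ∂μ = ∑ i, μ.real (s ∩ g ⁻¹' {i}) * c i := by
  have hconst : ∀ i, Set.EqOn (fun x => c (g x)) (fun _ => c i) (s ∩ g ⁻¹' {i}) :=
    fun i x hx => congrArg c hx.2
  have hfin : ∀ i, μ (s ∩ g ⁻¹' {i}) ≠ ⊤ :=
    fun i => ne_top_of_le_ne_top hμs (measure_mono Set.inter_subset_left)
  have hcover : ⋃ i, s ∩ g ⁻¹' {i} = s := by ext x; simp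
  conv_lhs => rw [← hcover]
  rw [integral_iUnion_fintype hg]
  · refine Finset.sum_congr rfl fun i _ => ?_
    rw [setIntegral_congr_fun (hg i) (hconst i), setIntegral_const, smul_eq_mul]
  · intro i j hij
    exact Disjoint.mono Set.inter_subset_right Set.inter_subset_right
      (Disjoint.preimage g (Set.disjoint_singleton.mpr hij))
  · exact fun i => (integrableOn_const (hfin i)).congr_fun (hconst i).symm (hg i)

theorem floor_add_eq_ite {x u : ℝ} (hu : u ∈ Set.Icc (0 : ℝ) 1) :
    (⌊x + u⌋ : ℝ) = ⌊x⌋ + if 1 - Int.fract x ≤ u then 1 else 0 := by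
  have h₀ := Int.fract_nonneg x
  have h₁ := Int.fract_lt_one x
  have hx := Int.floor_add_fract x
  split_ifs with h
  · have : ⌊x + u⌋ = ⌊x⌋ + 1 := by
      rw [Int.floor_eq_iff]; push_cast; constructor <;> linarith [hu.2]
    rw [this]; push_cast; ring
  · have : ⌊x + u⌋ = ⌊x⌋ := by
      rw [Int.floor_eq_iff]; constructor <;> linarith [hu.1]
    rw [this, add_zero]

theorem mem_ite_Icc_Ico_iff {t u : ℝ} (ht₀ : 0 ≤ t) (ht₁ : t < 1) (b : Prop) [Decidable b] :
    (u ∈ if b then Set.Icc (1 - t) 1 else Set.Ico 0 (1 - t))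
      ↔ (0 ≤ u ∧ u ≤ 1) ∧ (1 - t ≤ u ↔ b) := by
  split_ifs with hb
  · simp only [hb, iff_true, Set.mem_Icc]
    exact ⟨fun h => ⟨⟨by linarith [h.1], h.2⟩, h.1⟩, fun h => ⟨h.2, h.1.2⟩⟩
  · simp only [hb, iff_false, not_le, Set.mem_Ico]
    exact ⟨fun h => ⟨⟨h.1, by linarith [h.2]⟩, h.2⟩, fun h => ⟨h.1.1, h.2⟩⟩

theorem setIntegral_Icc_add_eq_multilinInterp {ι : Type*} [Fintype ι] [DecidableEq ι]
    (f : (ι → ℝ) → ℝ) (hf : ∀ y, f y = f fun j => ⌊y j⌋) (x : ι → ℝ) :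
    ∫ u in Set.Icc (0 : ι → ℝ) 1, f (x + u) = multilinInterp Finset.univ
      (fun j => Int.fract (x j)) (fun j => ⌊x j⌋) (fun j => ⌊x j⌋ + 1) 0 f := by
  -- the coordinates in which `x + u` has passed the next integer
  let label : (ι → ℝ) → Finset ι := fun u =>
    Finset.univ.filter fun j => 1 - Int.fract (x j) ≤ u j
  have hfiber : ∀ T, Set.Icc (0 : ι → ℝ) 1 ∩ label ⁻¹' {T} = Set.univ.pi fun j =>
      if j ∈ T then Set.Icc (1 - Int.fract (x j)) 1 else Set.Ico 0 (1 - Int.fract (x j)) := by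
    intro T
    ext u
    simp only [Set.mem_inter_iff, Set.mem_preimage, Set.mem_singleton_iff, Finset.ext_iff,
      Finset.mem_filter, Finset.mem_univ, true_and, Set.mem_Icc, Pi.le_def, Set.mem_pi,
      Set.mem_univ, forall_const, label, ← forall_and]
    exact forall_congr' fun j =>
      (mem_ite_Icc_Ico_iff (Int.fract_nonneg _) (Int.fract_lt_one _) _).symm
  have hvalue : ∀ u ∈ Set.Icc (0 : ι → ℝ) 1,
      f (x + u) = f ((label u).piecewise (fun j => ⌊x j⌋ + 1) fun j => ⌊x j⌋) := by
    intro u hu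
    rw [hf]
    congr 1
    funext j
    rw [Pi.add_apply, floor_add_eq_ite ⟨hu.1 j, hu.2 j⟩]
    by_cases hj : 1 - Int.fract (x j) ≤ u j <;>
      simp only [Finset.piecewise, label, Finset.mem_filter, Finset.mem_univ, true_and, hj,
        ite_true, ite_false, add_zero]
  have hvol : ∀ T : Finset ι, volume.real (Set.Icc (0 : ι → ℝ) 1 ∩ label ⁻¹' {T})
      = (∏ j ∈ T, Int.fract (x j)) * ∏ j ∈ Finset.univ \ T, (1 - Int.fract (x j)) := by
    intro T
    rw [hfiber, measureReal_def, volume_pi_pi, ENNReal.toReal_prod,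
      ← Finset.prod_filter_mul_prod_filter_not Finset.univ (· ∈ T), Finset.filter_mem_eq_inter,
      Finset.univ_inter, Finset.filter_not, Finset.filter_mem_eq_inter, Finset.univ_inter]
    congr 1 <;> refine Finset.prod_congr rfl fun j hj => ?_ <;> rw [← measureReal_def]
    · rw [if_pos hj, Real.volume_real_Icc_of_le (by linarith [Int.fract_nonneg (x j)])]; ring
    · rw [if_neg (Finset.mem_sdiff.mp hj).2,
        Real.volume_real_Ico_of_le (by linarith [Int.fract_lt_one (x j)])]; ring
  have hmeas : ∀ T, MeasurableSet (Set.Icc (0 : ι → ℝ) 1 ∩ label ⁻¹' {T}) := fun T => by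
    rw [hfiber]
    exact MeasurableSet.univ_pi fun j => by
      split_ifs; exacts [measurableSet_Icc, measurableSet_Ico]
  rw [setIntegral_congr_fun measurableSet_Icc hvalue]
  refine (setIntegral_comp_fintype isCompact_Icc.measure_lt_top.ne label hmeas
    fun T => f (T.piecewise _ _)).trans ?_
  rw [multilinInterp, Finset.powerset_univ, Finset.piecewise_univ]
  exact Finset.sum_congr rfl fun T _ => by rw [hvol]

def linInterp (g : ℝ → ℝ) (x : ℝ) : ℝ :=
  (1 - Int.fract x) * g ⌊x⌋ + Int.fract x * g (⌊x⌋ + 1)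

theorem setIntegral_Icc_add_eq_linInterp (f : ℝ → ℝ) (hf : ∀ y, f y = f ⌊y⌋) (x : ℝ) :
    ∫ u in Set.Icc (0 : ℝ) 1, f (x + u) = linInterp f x := by
  let label : ℝ → Bool := fun u => decide (1 - Int.fract x ≤ u)
  have hfiber : ∀ b, Set.Icc (0 : ℝ) 1 ∩ label ⁻¹' {b} =
      if b = true then Set.Icc (1 - Int.fract x) 1 else Set.Ico 0 (1 - Int.fract x) := by
    intro b
    ext u
    rw [mem_ite_Icc_Ico_iff (Int.fract_nonneg x) (Int.fract_lt_one x)]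
    cases b <;> simp [label]
  have hvalue : ∀ u ∈ Set.Icc (0 : ℝ) 1,
      f (x + u) = f (⌊x⌋ + if label u then 1 else 0) := by
    intro u hu
    rw [hf, floor_add_eq_ite hu]
    simp [label]
  have hmeas : ∀ b, MeasurableSet (Set.Icc (0 : ℝ) 1 ∩ label ⁻¹' {b}) := fun b => by
    rw [hfiber]; split_ifs; exacts [measurableSet_Icc, measurableSet_Ico]
  rw [setIntegral_congr_fun measurableSet_Icc hvalue]
  refine (setIntegral_comp_fintype isCompact_Icc.measure_lt_top.ne label hmeas
    fun b => f (⌊x⌋ + if b then 1 else 0)).trans ?_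
  rw [Fintype.sum_bool, hfiber, hfiber, if_pos rfl, if_neg Bool.false_ne_true,
    Real.volume_real_Icc_of_le (by linarith [Int.fract_nonneg x]),
    Real.volume_real_Ico_of_le (by linarith [Int.fract_lt_one x]), linInterp]
  simp only [ite_true, Bool.false_eq_true, ite_false, add_zero]
  ring

theorem linInterp_intCast_add (g : ℝ → ℝ) (n : ℤ) {s : ℝ}
    (hs : s ∈ Set.Icc (0 : ℝ) 1) : linInterp g (n + s) = (1 - s) * g n + s * g (n + 1) := by
  rcases hs.2.lt_or_eq with hs1 | rfl
  · have hfl : ⌊s⌋ = 0 := Int.floor_eq_zero_iff.mpr ⟨hs.1, hs1⟩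
    rw [linInterp, Int.fract_intCast_add, Int.floor_intCast_add, hfl,
      Int.fract_eq_self.mpr ⟨hs.1, hs1⟩]
    simp
  · have : (n : ℝ) + 1 = ((n + 1 : ℤ) : ℝ) := by push_cast; ring
    rw [linInterp, this, Int.fract_intCast, Int.floor_intCast]
    ring

theorem linInterp_intCast (g : ℝ → ℝ) (n : ℤ) : linInterp g n = g n := by
  simpa using linInterp_intCast_add g n (s := 0) ⟨le_rfl, zero_le_one⟩

theorem linInterp_le_of_lt {g : ℝ → ℝ} (hg : Monotone g) {x : ℝ} {m : ℤ} (hx : x < m) :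
    linInterp g x ≤ g m := by
  have hfl : ⌊x⌋ + 1 ≤ m := Int.floor_lt.mpr hx
  have h₁ : g ⌊x⌋ ≤ g m := hg (by exact_mod_cast (by omega : ⌊x⌋ ≤ m))
  have h₂ : g (⌊x⌋ + 1) ≤ g m := hg (by exact_mod_cast hfl)
  have := Int.fract_nonneg x
  have := Int.fract_lt_one x
  rw [linInterp]
  nlinarith

theorem sub_div_sub_mem_Icc {a b u : ℝ} (ha : a < u) (hb : u ≤ b) :
    (u - a) / (b - a) ∈ Set.Icc (0 : ℝ) 1 :=
  ⟨div_nonneg (by linarith) (by linarith), (div_le_one (by linarith)).mpr (by linarith)⟩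

theorem genInv_eq_of_isLeast {G : ℝ → ℝ} {u x : ℝ} (hu : u ≠ 0)
    (hx : IsLeast {y | u ≤ G y} x) : genInv G u = x := by
  rw [genInv, if_neg hu, hx.csInf_eq]

theorem genInv_one_of_forall_lt {G : ℝ → ℝ} (hG : ∀ x, G x < 1) : genInv G 1 = 0 := by
  have : {x | (1 : ℝ) ≤ G x} = ∅ := Set.eq_empty_of_forall_notMem fun x hx => (hG x).not_ge hx
  rw [genInv, if_neg one_ne_zero, this, Real.sInf_empty]

section ClRange

variable {F : ℝ → ℝ} {u : ℝ}

theorem zero_mem_clRange : (0 : ℝ) ∈ clRange F := Or.inl (Or.inl rfl)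

theorem one_mem_clRange : (1 : ℝ) ∈ clRange F := Or.inl (Or.inr rfl)

theorem uMinus_of_mem (hu : u ∈ clRange F) : uMinus F u = u :=
  IsGreatest.csSup_eq ⟨⟨hu, le_rfl⟩, fun _ hr => hr.2⟩

theorem uPlus_of_mem (hu : u ∈ clRange F) : uPlus F u = u :=
  IsLeast.csInf_eq ⟨⟨hu, le_rfl⟩, fun _ hr => hr.2⟩

theorem lam_of_mem (hu : u ∈ clRange F) : lam F u = 1 := by
  rw [lam, if_pos (by rw [uMinus_of_mem hu, uPlus_of_mem hu])]

end ClRange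

/-- The properties of the distribution function of an `ℕ`-valued random variable that the
argument uses. -/
structure IsNatCDF (F : ℝ → ℝ) : Prop where
  mono : Monotone F
  eq_floor : ∀ x, F x = F ⌊x⌋
  eq_zero_of_neg : ∀ x < 0, F x = 0
  le_one : ∀ x, F x ≤ 1
  exists_ge : ∀ v < 1, ∃ k : ℕ, v ≤ F k

namespace IsNatCDF

variable {F : ℝ → ℝ}

theorem nonneg (hF : IsNatCDF F) (x : ℝ) : 0 ≤ F x := by
  rcases lt_or_ge x 0 with hx | hx
  · exact (hF.eq_zero_of_neg x hx).ge
  · exact (hF.eq_zero_of_neg (-1) (by norm_num)).symm.le.trans (hF.mono (by linarith))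

theorem le_of_lt_add_one (hF : IsNatCDF F) {x : ℝ} {m : ℤ} (hx : x < m + 1) : F x ≤ F m := by
  rw [hF.eq_floor]
  exact hF.mono (by exact_mod_cast Int.lt_add_one_iff.mp (Int.floor_lt.mpr (by exact_mod_cast hx)))

theorem intCast_mem_clRange (hF : IsNatCDF F) (m : ℤ) : F m ∈ clRange F := by
  rcases lt_or_ge m 0 with hm | hm
  · rw [hF.eq_zero_of_neg m (by exact_mod_cast hm)]
    exact zero_mem_clRange
  · exact Or.inr ⟨m.toNat, by rw [← Int.cast_natCast, Int.toNat_of_nonneg hm]⟩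

theorem clRange_subset_Icc (hF : IsNatCDF F) : clRange F ⊆ Set.Icc 0 1 := by
  rintro r ((rfl | rfl) | ⟨k, rfl⟩)
  · exact ⟨le_rfl, zero_le_one⟩
  · exact ⟨zero_le_one, le_rfl⟩
  · exact ⟨hF.nonneg k, hF.le_one k⟩

theorem le_or_ge_of_mem_clRange (hF : IsNatCDF F) (m : ℤ) {r : ℝ} (hr : r ∈ clRange F) :
    r ≤ F m ∨ F (m + 1) ≤ r := by
  rcases hr with (rfl | rfl) | ⟨k, rfl⟩
  · exact Or.inl (hF.nonneg m)
  · exact Or.inr (hF.le_one _)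
  · rcases le_or_gt (k : ℤ) m with hk | hk
    · exact Or.inl (hF.mono (by exact_mod_cast hk))
    · exact Or.inr (hF.mono (by exact_mod_cast (Int.add_one_le_iff.mpr hk)))

theorem exists_lt_le (hF : IsNatCDF F) {v : ℝ} (hv : 0 < v) {k : ℕ} (hk : v ≤ F k) :
    ∃ m : ℤ, F m < v ∧ v ≤ F (m + 1) := by
  induction k with
  | zero => exact ⟨-1, by rw [hF.eq_zero_of_neg _ (by norm_num)]; exact hv, by simpa using hk⟩
  | succ k ih =>
    by_cases hkv : v ≤ F k
    · exact ih hkv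
    · exact ⟨k, by simpa using hkv, by simpa using hk⟩

theorem eq_zero_or_exists_lt_le_or_eq_one (hF : IsNatCDF F) {u : ℝ}
    (hu : u ∈ Set.Icc (0 : ℝ) 1) :
    u = 0 ∨ (∃ m : ℤ, F m < u ∧ u ≤ F (m + 1)) ∨ (u = 1 ∧ ∀ x, F x < 1) := by
  rcases hu.1.eq_or_lt with rfl | hpos
  · exact Or.inl rfl
  by_cases hex : ∃ k : ℕ, u ≤ F k
  · obtain ⟨k, hk⟩ := hex
    exact Or.inr (Or.inl (hF.exists_lt_le hpos hk))
  push Not at hex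
  have hu1 : u = 1 := by
    by_contra h
    obtain ⟨k, hk⟩ := hF.exists_ge u (hu.2.lt_of_ne h)
    exact (hex k).not_ge hk
  refine Or.inr (Or.inr ⟨hu1, fun x => ?_⟩)
  calc F x ≤ F ⌈x⌉₊ := hF.mono (Nat.le_ceil x)
    _ < 1 := hu1 ▸ hex _

theorem genInv_eq (hF : IsNatCDF F) {v : ℝ} {m : ℤ} (hm : F m < v) (hv : v ≤ F (m + 1)) :
    genInv F v = m + 1 := by
  refine genInv_eq_of_isLeast (hF.nonneg m |>.trans_lt hm).ne' ⟨hv, fun x hx => ?_⟩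
  by_contra! hlt
  exact (hF.le_of_lt_add_one hlt).not_gt (hm.trans_le hx)

theorem apply_genInv_intCast (hF : IsNatCDF F) (m : ℤ) : F (genInv F (F m)) = F m := by
  rcases (hF.nonneg m).eq_or_lt with h0 | hpos
  · rw [← h0, genInv, if_pos rfl, hF.eq_zero_of_neg _ (by norm_num)]
  obtain ⟨n, hn, hmn⟩ :=
    hF.exists_lt_le hpos (k := m.toNat) (hF.mono (by exact_mod_cast Int.self_le_toNat m))
  have hnm : n + 1 ≤ m := Int.add_one_le_iff.mpr <| by
    by_contra! h
    exact hn.not_ge (hF.mono (by exact_mod_cast h))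
  rw [hF.genInv_eq hn hmn]
  exact le_antisymm (hF.mono (by exact_mod_cast hnm)) (by exact_mod_cast hmn)

theorem uPlus_eq (hF : IsNatCDF F) {u : ℝ} {m : ℤ} (hm : F m < u) (hu : u ≤ F (m + 1)) :
    uPlus F u = F (m + 1) := by
  refine IsLeast.csInf_eq ⟨⟨?_, hu⟩, fun r hr => ?_⟩
  · exact_mod_cast hF.intCast_mem_clRange (m + 1)
  · exact (hF.le_or_ge_of_mem_clRange m hr.1).resolve_left fun h => (hm.trans_le hr.2).not_ge h

theorem uMinus_eq (hF : IsNatCDF F) {u : ℝ} {m : ℤ} (hm : F m ≤ u) (hu : u < F (m + 1)) :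
    uMinus F u = F m := by
  refine IsGreatest.csSup_eq ⟨⟨hF.intCast_mem_clRange m, hm⟩, fun r hr => ?_⟩
  exact (hF.le_or_ge_of_mem_clRange m hr.1).resolve_right fun h => (hr.2.trans_lt hu).not_ge h

theorem lam_eq (hF : IsNatCDF F) {u : ℝ} {m : ℤ} (hm : F m < u) (hu : u ≤ F (m + 1)) :
    lam F u = (u - F m) / (F (m + 1) - F m) := by
  rcases hu.eq_or_lt with rfl | hlt
  · have hmem : F (m + 1) ∈ clRange F := by exact_mod_cast hF.intCast_mem_clRange (m + 1)
    rw [lam_of_mem hmem, div_self (sub_pos.mpr hm).ne']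
  · rw [lam, hF.uMinus_eq hm.le hlt, hF.uPlus_eq hm hu, if_neg (hm.trans hlt).ne]

theorem uPlus_mem_clRange (hF : IsNatCDF F) {u : ℝ} (hu : u ∈ Set.Icc (0 : ℝ) 1) :
    uPlus F u ∈ clRange F := by
  rcases hF.eq_zero_or_exists_lt_le_or_eq_one hu with rfl | ⟨m, hm, hum⟩ | ⟨rfl, -⟩
  · rw [uPlus_of_mem zero_mem_clRange]; exact zero_mem_clRange
  · rw [hF.uPlus_eq hm hum]; exact_mod_cast hF.intCast_mem_clRange (m + 1)
  · rw [uPlus_of_mem one_mem_clRange]; exact one_mem_clRange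

theorem uMinus_mem_clRange (hF : IsNatCDF F) {u : ℝ} (hu : u ∈ Set.Icc (0 : ℝ) 1) :
    uMinus F u ∈ clRange F := by
  rcases hF.eq_zero_or_exists_lt_le_or_eq_one hu with rfl | ⟨m, hm, hum⟩ | ⟨rfl, -⟩
  · rw [uMinus_of_mem zero_mem_clRange]; exact zero_mem_clRange
  · rcases hum.eq_or_lt with rfl | hlt
    · have hmem : F (m + 1) ∈ clRange F := by exact_mod_cast hF.intCast_mem_clRange (m + 1)
      rw [uMinus_of_mem hmem]; exact hmem
    · rw [hF.uMinus_eq hm.le hlt]; exact hF.intCast_mem_clRange m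
  · rw [uMinus_of_mem one_mem_clRange]; exact one_mem_clRange

theorem genInv_linInterp_eq (hF : IsNatCDF F) {u : ℝ} {m : ℤ} (hm : F m < u)
    (hu : u ≤ F (m + 1)) :
    genInv (linInterp F) u = m + (u - F m) / (F (m + 1) - F m) := by
  set s := (u - F m) / (F (m + 1) - F m)
  have hgap : 0 < F (m + 1) - F m := by linarith
  have hs : s ∈ Set.Icc (0 : ℝ) 1 := sub_div_sub_mem_Icc hm hu
  have hu_eq : u = F m + s * (F (m + 1) - F m) := by
    rw [div_mul_cancel₀ _ hgap.ne']; ring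
  have hval : ∀ s' ∈ Set.Icc (0 : ℝ) 1,
      linInterp F (m + s') = F m + s' * (F (m + 1) - F m) := fun s' hs' => by
    rw [linInterp_intCast_add F m hs']; ring
  refine genInv_eq_of_isLeast (hF.nonneg m |>.trans_lt hm).ne'
    ⟨(hval s hs).ge.trans' hu_eq.le, fun x (hx : u ≤ linInterp F x) => ?_⟩
  by_contra! hlt
  rcases lt_or_ge x m with hxm | hxm
  · exact (linInterp_le_of_lt hF.mono hxm).not_gt (hm.trans_le hx)
  · have hx' := hval (x - m) ⟨by linarith, by linarith [hs.2]⟩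
    rw [add_sub_cancel] at hx'
    nlinarith [mul_lt_mul_of_pos_right (show x - m < s by linarith) hgap]

theorem linInterp_genInv_linInterp (hF : IsNatCDF F) {u : ℝ} (hu : u ∈ Set.Icc (0 : ℝ) 1)
    {g : ℝ → ℝ} (hg : ∀ x y, F x = F y → g x = g y) :
    linInterp g (genInv (linInterp F) u)
      = (1 - lam F u) * g (genInv F (uMinus F u)) + lam F u * g (genInv F (uPlus F u)) := by
  rcases hF.eq_zero_or_exists_lt_le_or_eq_one hu with rfl | ⟨m, hm, hum⟩ | ⟨rfl, hlt⟩
  · have h₀ : ∀ G : ℝ → ℝ, genInv G 0 = ((-1 : ℤ) : ℝ) := fun G => by simp [genInv]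
    rw [uMinus_of_mem zero_mem_clRange, uPlus_of_mem zero_mem_clRange,
      lam_of_mem zero_mem_clRange, h₀, h₀, linInterp_intCast]
    ring
  · have hs : lam F u ∈ Set.Icc (0 : ℝ) 1 := hF.lam_eq hm hum ▸ sub_div_sub_mem_Icc hm hum
    have hmem : F (m + 1) ∈ clRange F := by exact_mod_cast hF.intCast_mem_clRange (m + 1)
    have hplus : g (genInv F (F (m + 1))) = g (m + 1) :=
      hg _ _ (by exact_mod_cast hF.apply_genInv_intCast (m + 1))
    have hminus : (1 - lam F u) * g m = (1 - lam F u) * g (genInv F (uMinus F u)) := by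
      rcases hum.eq_or_lt with rfl | hlt
      · rw [lam_of_mem hmem, sub_self, zero_mul, zero_mul]
      · rw [hF.uMinus_eq hm.le hlt, hg _ m (hF.apply_genInv_intCast m)]
    rw [hF.genInv_linInterp_eq hm hum, ← hF.lam_eq hm hum, linInterp_intCast_add g m hs,
      hF.uPlus_eq hm hum, hplus, hminus]
  -- Both generalized inverses are `sInf ∅ = 0` here.
  · have hlt' : ∀ x, linInterp F x < 1 := fun x => by
      have := Int.fract_nonneg x
      have := Int.fract_lt_one x
      rw [linInterp]
      nlinarith [hlt ⌊x⌋, hlt (⌊x⌋ + 1)]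
    rw [uMinus_of_mem one_mem_clRange, uPlus_of_mem one_mem_clRange, lam_of_mem one_mem_clRange,
      genInv_one_of_forall_lt hlt, genInv_one_of_forall_lt hlt']
    simpa using linInterp_intCast g 0

end IsNatCDF

theorem natCast_le_intFloor_iff (k : ℕ) (x : ℝ) :
    (k : ℝ) ≤ ⌊x⌋ ↔ (k : ℝ) ≤ x := by
  rw [← Int.cast_natCast, Int.cast_le, Int.le_floor, Int.cast_natCast]

section NatValued

variable {Ω : Type*} [MeasurableSpace Ω] (P : Measure Ω) [IsProbabilityMeasure P]

theorem isNatCDF_of_natValued {Y : Ω → ℝ} (hY : ∀ ω, ∃ k : ℕ, Y ω = k) :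
    IsNatCDF fun x => (P {ω | Y ω ≤ x}).toReal where
  mono _ _ hxy :=
    ENNReal.toReal_mono (measure_ne_top P _) (measure_mono fun _ hω => le_trans hω hxy)
  eq_floor x := by
    congr 2
    ext ω
    obtain ⟨k, hk⟩ := hY ω
    simp only [Set.mem_ofPred_eq, hk, natCast_le_intFloor_iff]
  eq_zero_of_neg x hx := by
    have : {ω | Y ω ≤ x} = ∅ := Set.eq_empty_of_forall_notMem fun ω hω => by
      obtain ⟨k, hk⟩ := hY ω
      exact (hω.trans_lt hx).not_ge (hk ▸ k.cast_nonneg)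
    simp [this]
  le_one _ := measureReal_le_one
  exists_ge v hv := by
    have hunion : ⋃ k : ℕ, {ω | Y ω ≤ k} = Set.univ :=
      Set.eq_univ_of_forall fun ω => Set.mem_iUnion.mpr ((hY ω).imp fun _ hk => hk.le)
    have hsup : ⨆ k : ℕ, P {ω | Y ω ≤ k} = 1 := by
      rw [← Monotone.measure_iUnion, hunion, measure_univ]
      exact fun k l hkl ω (hω : Y ω ≤ k) => hω.trans (by exact_mod_cast hkl)
    rcases lt_or_ge v 0 with hv0 | hv0
    · exact ⟨0, hv0.le.trans ENNReal.toReal_nonneg⟩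
    obtain ⟨k, hk⟩ := lt_iSup_iff.mp (hsup ▸ ENNReal.ofReal_lt_one.mpr hv)
    exact ⟨k, ((ENNReal.ofReal_lt_iff_lt_toReal hv0 (measure_ne_top P _)).mp hk).le⟩

theorem measure_forall_le_update_congr {ι : Type*} [DecidableEq ι] {X : Ω → ι → ℝ}
    (hX : Measurable X) (z : ι → ℝ) (j : ι) {x y : ℝ}
    (h : P {ω | X ω j ≤ x} = P {ω | X ω j ≤ y}) :
    P {ω | ∀ i, X ω i ≤ update z j x i} = P {ω | ∀ i, X ω i ≤ update z j y i} := by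
  wlog hxy : x ≤ y generalizing x y
  · exact (this h.symm (le_of_not_ge hxy)).symm
  have hsplit : ∀ x', {ω | ∀ i, X ω i ≤ update z j x' i}
      = {ω | X ω j ≤ x'} ∩ {ω | ∀ i ≠ j, X ω i ≤ z i} := fun x' => by
    ext ω
    exact forall_update_iff z fun i r => X ω i ≤ r
  have hmeas : MeasurableSet {ω | X ω j ≤ x} :=
    measurableSet_le ((measurable_pi_apply j).comp hX) measurable_const
  have hae : {ω | X ω j ≤ x} =ᵐ[P] {ω | X ω j ≤ y} :=
    ae_eq_of_subset_of_measure_ge (fun ω hω => le_trans hω hxy) h.ge hmeas.nullMeasurableSet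
      (measure_ne_top P _)
  rw [hsplit, hsplit]
  exact measure_congr (hae.inter EventuallyEq.rfl)

end NatValued

section Copula

variable {d : ℕ} {H : (Fin d → ℝ) → ℝ} {F : Fin d → ℝ → ℝ}

theorem mlinCopula_eq_multilinInterp (hF : ∀ j, IsNatCDF (F j))
    (hH_floor : ∀ x, H x = H fun j => ⌊x j⌋)
    (hH_marg : ∀ j z x y, F j x = F j y → H (update z j x) = H (update z j y))
    {u : Fin d → ℝ} (hu : u ∈ Set.Icc 0 1) :
    mlinCopula d H F u = multilinInterp Finset.univ (fun j => lam (F j) (u j))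
      (fun j => genInv (F j) (uMinus (F j) (u j))) (fun j => genInv (F j) (uPlus (F j) (u j)))
      0 H := by
  have hmlin1 : ∀ j, mlin1 (F j) = linInterp (F j) :=
    fun j => funext (setIntegral_Icc_add_eq_linInterp _ (hF j).eq_floor)
  rw [mlinCopula, mlin, setIntegral_Icc_add_eq_multilinInterp H hH_floor]
  refine multilinInterp_congr 0 fun j _ z => ?_
  rw [hmlin1]
  exact (hF j).linInterp_genInv_linInterp ⟨hu.1 j, hu.2 j⟩ (hH_marg j z)

theorem mlinCopula_eq_sum_lamS (hF : ∀ j, IsNatCDF (F j))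
    (hH_floor : ∀ x, H x = H fun j => ⌊x j⌋)
    (hH_marg : ∀ j z x y, F j x = F j y → H (update z j x) = H (update z j y))
    {u : Fin d → ℝ} (hu : u ∈ Set.Icc 0 1) :
    mlinCopula d H F u = ∑ S, lamS d F S u * H (fun j => genInv (F j) (uSel d F S u j)) := by
  rw [mlinCopula_eq_multilinInterp hF hH_floor hH_marg hu, multilinInterp, Finset.powerset_univ,
    Finset.piecewise_univ]
  refine Finset.sum_congr rfl fun S _ => ?_
  rw [lamS, Finset.compl_eq_univ_sdiff]
  congr 2
  funext j
  by_cases hj : j ∈ S <;> simp [uSel, hj]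

theorem mlinCopula_uSel (hF : ∀ j, IsNatCDF (F j))
    (hH_floor : ∀ x, H x = H fun j => ⌊x j⌋)
    (hH_marg : ∀ j z x y, F j x = F j y → H (update z j x) = H (update z j y))
    (S : Finset (Fin d)) {u : Fin d → ℝ} (hu : u ∈ Set.Icc 0 1) :
    mlinCopula d H F (uSel d F S u) = H (fun j => genInv (F j) (uSel d F S u j)) := by
  have hmem : ∀ j, uSel d F S u j ∈ clRange (F j) := fun j => by
    unfold uSel
    split_ifs
    exacts [(hF j).uPlus_mem_clRange ⟨hu.1 j, hu.2 j⟩,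
      (hF j).uMinus_mem_clRange ⟨hu.1 j, hu.2 j⟩]
  have hIcc : uSel d F S u ∈ Set.Icc 0 1 := ⟨fun j => ((hF j).clRange_subset_Icc (hmem j)).1,
    fun j => ((hF j).clRange_subset_Icc (hmem j)).2⟩
  rw [mlinCopula_eq_multilinInterp hF hH_floor hH_marg hIcc]
  simp only [lam_of_mem (hmem _), uPlus_of_mem (hmem _)]
  exact (multilinInterp_one _ _ _ _ H).trans (congrArg H (Finset.piecewise_univ _ _))

end Copula

theorem multilinear_copula_formula_general
    {Ω : Type*} [MeasurableSpace Ω] (P : Measure Ω) [IsProbabilityMeasure P]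
    (d : ℕ) (X : Ω → Fin d → ℝ) (hX : Measurable X)
    (hNat : ∀ ω j, ∃ k : ℕ, X ω j = k)
    (H : (Fin d → ℝ) → ℝ) (F : Fin d → ℝ → ℝ)
    (hH : ∀ x, H x = (P {ω | ∀ j, X ω j ≤ x j}).toReal)
    (hF : ∀ j x, F j x = (P {ω | X ω j ≤ x}).toReal) :
    (∀ u : Fin d → ℝ, u ∈ Set.Icc (0 : Fin d → ℝ) 1 →
      mlinCopula d H F u
        = ∑ S : Finset (Fin d),
            lamS d F S u * H (fun j => genInv (F j) (uSel d F S u j)))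
    ∧ (∀ (S : Finset (Fin d)) (u : Fin d → ℝ), u ∈ Set.Icc (0 : Fin d → ℝ) 1 →
      mlinCopula d H F (uSel d F S u)
        = H (fun j => genInv (F j) (uSel d F S u j))) := by
  have hF_cdf : ∀ j, IsNatCDF (F j) := fun j => by
    rw [funext (hF j)]
    exact isNatCDF_of_natValued P (hNat · j)
  have hH_floor : ∀ x, H x = H fun j => ⌊x j⌋ := fun x => by
    simp only [hH]
    congr 2
    ext ω
    exact forall_congr' fun j => by
      obtain ⟨k, hk⟩ := hNat ω j
      rw [hk, natCast_le_intFloor_iff]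
  have hH_marg : ∀ j z x y, F j x = F j y → H (update z j x) = H (update z j y) :=
    fun j z x y hxy => by
      rw [hF, hF, ENNReal.toReal_eq_toReal_iff' (measure_ne_top P _) (measure_ne_top P _)] at hxy
      rw [hH, hH, measure_forall_le_update_congr P hX z j hxy]
  exact ⟨fun u hu => mlinCopula_eq_sum_lamS hF_cdf hH_floor hH_marg hu,
    fun S u hu => mlinCopula_uSel hF_cdf hH_floor hH_marg S hu⟩

/-- Proposition 2.1: for `H` the distribution function of an `ℕ^d`-valued
random vector with margins `F₁,…,F_d`, the multilinear extension copula satisfies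
`C^⊞(u) = ∑_{S ⊆ {1,…,d}} λ_{H,S}(u) H(F₁⁻¹(u_{S₁}),…,F_d⁻¹(u_{S_d}))` on `[0,1]^d`;
in particular `C^⊞(u_{S₁},…,u_{S_d}) = H(F₁⁻¹(u_{S₁}),…,F_d⁻¹(u_{S_d}))` for every `S`. -/
theorem multilinear_copula_formula
    {Ω : Type*} [MeasurableSpace Ω] (P : Measure Ω) [IsProbabilityMeasure P]
    (d : ℕ) (hd : 1 ≤ d) (X : Ω → Fin d → ℝ) (hX : Measurable X)
    (hNat : ∀ ω j, ∃ k : ℕ, X ω j = k)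
    (H : (Fin d → ℝ) → ℝ) (F : Fin d → ℝ → ℝ)
    (hH : ∀ x, H x = (P {ω | ∀ j, X ω j ≤ x j}).toReal)
    (hF : ∀ j x, F j x = (P {ω | X ω j ≤ x}).toReal) :
    (∀ u : Fin d → ℝ, u ∈ Set.Icc (0 : Fin d → ℝ) 1 →
      mlinCopula d H F u
        = ∑ S : Finset (Fin d),
            lamS d F S u * H (fun j => genInv (F j) (uSel d F S u j)))
    ∧ (∀ (S : Finset (Fin d)) (u : Fin d → ℝ), u ∈ Set.Icc (0 : Fin d → ℝ) 1 →
      mlinCopula d H F (uSel d F S u)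
        = H (fun j => genInv (F j) (uSel d F S u j))) :=
  multilinear_copula_formula_general P d X hX hNat H F hH hF
end
end

section
/- Let U₁,…,U_d be independent random variables uniformly distributed on (0,1) and independent of (X₁,…,X_d). Then (i) H^⊞ is the joint distribution function of the vector (X₁+U₁−1,…,X_d+U_d−1), whose j-th margin is F_j^⊞; (ii) each F_j^⊞ is a continuous distribution function; and (iii) for all (x₁,…,x_d) ∈ ℝ^d, H^⊞(x₁,…,x_d) = C^⊞(F₁^⊞(x₁),…,F_d^⊞(x_d)). -/
open MeasureTheory Filter Topology

noncomputable section

instance nu1_prob : IsProbabilityMeasure (volume.restrict (Set.Ioo (0:ℝ) 1)) :=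
  ⟨by simp [Real.volume_Ioo]⟩

lemma nu1_Iic (b : ℝ) :
    (volume.restrict (Set.Ioo (0:ℝ) 1)) (Set.Iic b) = ENNReal.ofReal (min b 1) := by
  rw [Measure.restrict_apply measurableSet_Iic]
  rcases le_or_gt 1 b with h | h
  · have he : Set.Iic b ∩ Set.Ioo (0:ℝ) 1 = Set.Ioo 0 1 := by
      ext u; simp only [Set.mem_inter_iff, Set.mem_Iic, Set.mem_Ioo]
      constructor
      · exact fun hu => hu.2
      · intro hu; exact ⟨by linarith [hu.2], hu⟩
    rw [he, Real.volume_Ioo, min_eq_right h]; norm_num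
  · have he : Set.Iic b ∩ Set.Ioo (0:ℝ) 1 = Set.Ioc 0 b := by
      ext u; simp only [Set.mem_inter_iff, Set.mem_Iic, Set.mem_Ioo, Set.mem_Ioc]
      constructor
      · rintro ⟨h1, h2, h3⟩; exact ⟨h2, h1⟩
      · rintro ⟨h1, h2⟩; exact ⟨h2, h1, by linarith⟩
    rw [he, Real.volume_Ioc, min_eq_left h.le]; norm_num

lemma nu1_Ici (a : ℝ) :
    (volume.restrict (Set.Ioo (0:ℝ) 1)) (Set.Ici a) = ENNReal.ofReal (min (1 - a) 1) := by
  rw [Measure.restrict_apply measurableSet_Ici]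
  rcases le_or_gt a 0 with h | h
  · have he : Set.Ici a ∩ Set.Ioo (0:ℝ) 1 = Set.Ioo 0 1 := by
      ext u; simp only [Set.mem_inter_iff, Set.mem_Ici, Set.mem_Ioo]
      constructor
      · exact fun hu => hu.2
      · intro hu; exact ⟨by linarith [hu.1], hu⟩
    rw [he, Real.volume_Ioo, min_eq_right (by linarith)]; norm_num
  · have he : Set.Ici a ∩ Set.Ioo (0:ℝ) 1 = Set.Ico a 1 := by
      ext u; simp only [Set.mem_inter_iff, Set.mem_Ici, Set.mem_Ioo, Set.mem_Ico]
      constructor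
      · rintro ⟨h1, h2, h3⟩; exact ⟨h1, h3⟩
      · rintro ⟨h1, h2⟩; exact ⟨h1, by linarith, h2⟩
    rw [he, Real.volume_Ico, min_eq_left (by linarith)]

lemma nu1_refl (a : ℝ) :
    (volume.restrict (Set.Ioo (0:ℝ) 1)) (Set.Ici a)
      = (volume.restrict (Set.Ioo (0:ℝ) 1)) (Set.Iic (1 - a)) := by
  rw [nu1_Iic, nu1_Ici]

lemma pi_restrict_eq (d : ℕ) :
    (Measure.pi fun _ : Fin d => volume.restrict (Set.Ioo (0:ℝ) 1))
      = (volume : Measure (Fin d → ℝ)).restrict (Set.pi Set.univ fun _ => Set.Ioo (0:ℝ) 1) := by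
  refine Measure.pi_eq fun s hs => ?_
  rw [Measure.restrict_apply (MeasurableSet.univ_pi hs), ← Set.pi_inter_distrib,
    volume_pi, Measure.pi_pi]
  exact Finset.prod_congr rfl fun i _ => (Measure.restrict_apply (hs i)).symm

lemma restrict_Icc_eq (d : ℕ) :
    (volume : Measure (Fin d → ℝ)).restrict (Set.Icc 0 1)
      = Measure.pi fun _ : Fin d => volume.restrict (Set.Ioo (0:ℝ) 1) := by
  rw [pi_restrict_eq]
  refine Measure.restrict_congr_set ?_
  have h0 : (volume : Measure (Fin d → ℝ))
      (Set.Icc 0 1 \ Set.pi Set.univ fun _ => Set.Ioo (0:ℝ) 1) = 0 := by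
    have hsub : (Set.Icc (0 : Fin d → ℝ) 1 \ Set.pi Set.univ fun _ => Set.Ioo (0:ℝ) 1)
        ⊆ ⋃ j : Fin d, (Function.eval j) ⁻¹' ({0, 1} : Set ℝ) := by
      intro u hu
      rcases hu with ⟨hu1, hu2⟩
      rw [← Set.pi_univ_Icc] at hu1
      simp only [Set.mem_univ_pi] at hu1 hu2
      push_neg at hu2
      obtain ⟨j, hj⟩ := hu2
      refine Set.mem_iUnion.2 ⟨j, ?_⟩
      have h1 := hu1 j
      simp only [Set.mem_Icc, Pi.zero_apply, Pi.one_apply] at h1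
      simp only [Set.mem_Ioo] at hj
      simp only [Set.mem_preimage, Set.mem_insert_iff, Set.mem_singleton_iff, Function.eval]
      rcases lt_or_eq_of_le h1.1 with h | h
      · right; rcases lt_or_eq_of_le h1.2 with h' | h'
        · exact absurd ⟨h, h'⟩ hj
        · exact h'
      · left; exact h.symm
    refine measure_mono_null hsub (measure_iUnion_null fun j => ?_)
    have : (Function.eval j ⁻¹' ({0, 1} : Set ℝ) : Set (Fin d → ℝ))
        = Set.pi Set.univ (Function.update (fun _ => Set.univ) j ({0, 1} : Set ℝ)) :=
      Set.eval_preimage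
    rw [this, volume_pi, Measure.pi_pi]
    refine Finset.prod_eq_zero (Finset.mem_univ j) ?_
    rw [Function.update_self]
    exact measure_union_null Real.volume_singleton Real.volume_singleton
  refine (MeasureTheory.ae_eq_set).2 ⟨h0, ?_⟩
  have : ((Set.pi Set.univ fun _ => Set.Ioo (0:ℝ) 1) \ Set.Icc (0 : Fin d → ℝ) 1) = ∅ := by
    rw [Set.diff_eq_empty, ← Set.pi_univ_Icc]
    exact Set.pi_mono fun i _ => Set.Ioo_subset_Icc_self
  rw [this]; exact measure_empty

lemma restrict_Icc_eq_1d :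
    (volume : Measure ℝ).restrict (Set.Icc 0 1) = volume.restrict (Set.Ioo (0:ℝ) 1) :=
  (Measure.restrict_congr_set (Ioo_ae_eq_Icc)).symm

/-- Fubini-type key lemma. -/
lemma key_fubini {Ω : Type*} [MeasurableSpace Ω] (P : Measure Ω) [IsProbabilityMeasure P]
    {β : Type*} [MeasurableSpace β] (ν : Measure β) [IsProbabilityMeasure ν]
    {S : Set (Ω × β)} (hS : MeasurableSet S) :
    ∫ u, (P {ω | (ω, u) ∈ S}).toReal ∂ν = ((P.prod ν) S).toReal := by
  rw [Measure.prod_apply_symm hS,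
    ← integral_toReal ((measurable_measure_prodMk_right hS).aemeasurable)
      (Filter.Eventually.of_forall fun u => measure_lt_top P _)]
  rfl

lemma pi_eval (d : ℕ) (j : Fin d) (s : Set ℝ) (hs : MeasurableSet s) :
    (Measure.pi fun _ : Fin d => volume.restrict (Set.Ioo (0:ℝ) 1)) {u | u j ∈ s}
      = (volume.restrict (Set.Ioo (0:ℝ) 1)) s := by
  have he : {u : Fin d → ℝ | u j ∈ s}
      = Set.pi Set.univ (fun i => if i = j then s else Set.univ) := by
    ext u
    simp only [Set.mem_setOf_eq, Set.mem_univ_pi]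
    constructor
    · intro h i
      by_cases hij : i = j
      · subst hij; simp [h]
      · simp [hij]
    · intro h; have := h j; simpa using this
  rw [he, Measure.pi_pi]
  refine Finset.prod_eq_single j (fun i _ hij => by simp [hij, measure_univ]) (by simp)
    |>.trans (by simp)

section Main

variable {Ω : Type*} [MeasurableSpace Ω] (P : Measure Ω) [IsProbabilityMeasure P]
  {d : ℕ} {X : Ω → Fin d → ℝ}

lemma part1_joint (hX : Measurable X) (H : (Fin d → ℝ) → ℝ)
    (hH : ∀ x, H x = (P {ω | ∀ j, X ω j ≤ x j}).toReal) (x : Fin d → ℝ) :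
    mlin d H x
      = ((P.prod (Measure.pi fun _ : Fin d => volume.restrict (Set.Ioo (0:ℝ) 1)))
          {p : Ω × (Fin d → ℝ) | ∀ j, X p.1 j + p.2 j - 1 ≤ x j}).toReal := by
  set ν : Measure (Fin d → ℝ) := Measure.pi fun _ : Fin d => volume.restrict (Set.Ioo (0:ℝ) 1)
    with hν
  set T : Set (Ω × (Fin d → ℝ)) := {p | ∀ j, X p.1 j ≤ x j + p.2 j} with hT
  set S : Set (Ω × (Fin d → ℝ)) := {p | ∀ j, X p.1 j + p.2 j - 1 ≤ x j} with hS
  have hmT : MeasurableSet T := by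
    rw [hT, Set.setOf_forall]
    exact MeasurableSet.iInter fun j => measurableSet_le
      ((measurable_pi_apply j).comp (hX.comp measurable_fst))
      (measurable_const.add ((measurable_pi_apply j).comp measurable_snd))
  have hmS : MeasurableSet S := by
    rw [hS, Set.setOf_forall]
    exact MeasurableSet.iInter fun j => measurableSet_le
      ((((measurable_pi_apply j).comp (hX.comp measurable_fst)).add
        ((measurable_pi_apply j).comp measurable_snd)).sub measurable_const)
      measurable_const
  have hprob : IsProbabilityMeasure ν := by rw [hν]; infer_instance
  calc mlin d H x = ∫ u, H (x + u) ∂ν := by rw [mlin, restrict_Icc_eq]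
    _ = ∫ u, (P {ω | (ω, u) ∈ T}).toReal ∂ν := by
        refine integral_congr_ae (Filter.Eventually.of_forall fun u => ?_)
        show H (x + u) = (P {ω | (ω, u) ∈ T}).toReal
        rw [hH]; rfl
    _ = ((P.prod ν) T).toReal := key_fubini P ν hmT
    _ = ((P.prod ν) S).toReal := by
        congr 1
        rw [Measure.prod_apply hmT, Measure.prod_apply hmS]
        refine lintegral_congr fun ω => ?_
        have h1 : (Prod.mk ω ⁻¹' T) = Set.pi Set.univ (fun j => Set.Ici (X ω j - x j)) := by
          ext u
          simp only [Set.mem_preimage, hT, Set.mem_setOf_eq, Set.mem_univ_pi, Set.mem_Ici]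
          constructor
          · intro h j; linarith [h j]
          · intro h j; linarith [h j]
        have h2 : (Prod.mk ω ⁻¹' S) = Set.pi Set.univ (fun j => Set.Iic (x j + 1 - X ω j)) := by
          ext u
          simp only [Set.mem_preimage, hS, Set.mem_setOf_eq, Set.mem_univ_pi, Set.mem_Iic]
          constructor
          · intro h j; linarith [h j]
          · intro h j; linarith [h j]
        rw [h1, h2, hν, Measure.pi_pi, Measure.pi_pi]
        refine Finset.prod_congr rfl fun j _ => ?_
        rw [nu1_Ici, nu1_Iic]
        have : 1 - (X ω j - x j) = x j + 1 - X ω j := by ring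
        rw [this]

lemma part1_margin (hX : Measurable X) (F : Fin d → ℝ → ℝ)
    (hF : ∀ j x, F j x = (P {ω | X ω j ≤ x}).toReal) (j : Fin d) (x : ℝ) :
    mlin1 (F j) x
      = ((P.prod (Measure.pi fun _ : Fin d => volume.restrict (Set.Ioo (0:ℝ) 1)))
          {p : Ω × (Fin d → ℝ) | X p.1 j + p.2 j - 1 ≤ x}).toReal := by
  set ν : Measure (Fin d → ℝ) := Measure.pi fun _ : Fin d => volume.restrict (Set.Ioo (0:ℝ) 1)
    with hν
  set ν₁ : Measure ℝ := volume.restrict (Set.Ioo (0:ℝ) 1) with hν₁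
  have hXj : Measurable fun ω => X ω j := (measurable_pi_apply j).comp hX
  set T : Set (Ω × ℝ) := {q | X q.1 j ≤ x + q.2} with hT
  set S : Set (Ω × (Fin d → ℝ)) := {p | X p.1 j + p.2 j - 1 ≤ x} with hS
  have hmT : MeasurableSet T :=
    measurableSet_le (hXj.comp measurable_fst) (measurable_const.add measurable_snd)
  have hmS : MeasurableSet S :=
    measurableSet_le (((hXj.comp measurable_fst).add
      ((measurable_pi_apply j).comp measurable_snd)).sub measurable_const) measurable_const
  have hprob : IsProbabilityMeasure ν := by rw [hν]; infer_instance
  calc mlin1 (F j) x = ∫ u, F j (x + u) ∂ν₁ := by rw [mlin1, hν₁, restrict_Icc_eq_1d]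
    _ = ∫ u, (P {ω | (ω, u) ∈ T}).toReal ∂ν₁ := by
        refine integral_congr_ae (Filter.Eventually.of_forall fun u => ?_)
        show F j (x + u) = (P {ω | (ω, u) ∈ T}).toReal
        rw [hF]; rfl
    _ = ((P.prod ν₁) T).toReal := key_fubini P ν₁ hmT
    _ = ((P.prod ν) S).toReal := by
        congr 1
        rw [Measure.prod_apply hmT, Measure.prod_apply hmS]
        refine lintegral_congr fun ω => ?_
        have h1 : (Prod.mk ω ⁻¹' T) = Set.Ici (X ω j - x) := by
          ext u
          simp only [Set.mem_preimage, hT, Set.mem_setOf_eq, Set.mem_Ici]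
          constructor <;> intro h <;> linarith
        have h2 : (Prod.mk ω ⁻¹' S) = {u : Fin d → ℝ | u j ∈ Set.Iic (x + 1 - X ω j)} := by
          ext u
          simp only [Set.mem_preimage, hS, Set.mem_setOf_eq, Set.mem_Iic]
          constructor <;> intro h <;> linarith
        rw [h1, h2, hν, pi_eval d j _ measurableSet_Iic, ← hν₁, nu1_refl]
        have : 1 - (X ω j - x) = x + 1 - X ω j := by ring
        rw [this]

section F

variable (hNat : ∀ ω j, ∃ k : ℕ, X ω j = k) (F : Fin d → ℝ → ℝ)
  (hF : ∀ j x, F j x = (P {ω | X ω j ≤ x}).toReal) (j : Fin d)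

include P hNat hF

lemma Fmono : Monotone (F j) := fun a b hab => by
  rw [hF, hF]
  exact ENNReal.toReal_mono (measure_ne_top P _) (measure_mono fun ω h => le_trans h hab)

lemma Fnonneg (t : ℝ) : 0 ≤ F j t := by rw [hF]; exact ENNReal.toReal_nonneg

lemma Fle1 (t : ℝ) : F j t ≤ 1 := by
  rw [hF]
  have h := prob_le_one (μ := P) (s := {ω | X ω j ≤ t})
  have := ENNReal.toReal_mono ENNReal.one_ne_top h
  simpa using this

lemma Fzero (t : ℝ) (ht : t < 0) : F j t = 0 := by
  rw [hF]
  have : {ω | X ω j ≤ t} = ∅ := by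
    rw [Set.eq_empty_iff_forall_notMem]
    intro ω h
    obtain ⟨k, hk⟩ := hNat ω j
    rw [Set.mem_setOf_eq, hk] at h
    have : (0:ℝ) ≤ (k:ℝ) := Nat.cast_nonneg k
    linarith
  rw [this, measure_empty, ENNReal.toReal_zero]

lemma FintOn (x : ℝ) : Integrable (fun u => F j (x + u)) (volume.restrict (Set.Ioo (0:ℝ) 1)) := by
  refine Integrable.mono' (integrable_const 1)
    (((Fmono P hNat F hF j).measurable.comp (measurable_const.add measurable_id)).aestronglyMeasurable)
    (Filter.Eventually.of_forall fun u => ?_)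
  rw [Real.norm_eq_abs, abs_of_nonneg (Fnonneg P hNat F hF j _)]
  exact Fle1 P hNat F hF j _

lemma mlin1_eq (x : ℝ) :
    mlin1 (F j) x = ∫ u, F j (x + u) ∂(volume.restrict (Set.Ioo (0:ℝ) 1)) := by
  rw [mlin1, restrict_Icc_eq_1d]

lemma mlin1_mono : Monotone (mlin1 (F j)) := by
  intro a b hab
  rw [mlin1_eq P hNat F hF j, mlin1_eq P hNat F hF j]
  exact integral_mono (FintOn P hNat F hF j a) (FintOn P hNat F hF j b)
    (fun u => Fmono P hNat F hF j (by linarith))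

lemma mlin1_ge (x : ℝ) : F j x ≤ mlin1 (F j) x := by
  rw [mlin1_eq P hNat F hF j]
  have h0 : F j x = ∫ _u, F j x ∂(volume.restrict (Set.Ioo (0:ℝ) 1)) := by
    rw [integral_const]; simp [measure_univ]
  rw [h0]
  refine integral_mono_ae (integrable_const _) (FintOn P hNat F hF j x) ?_
  filter_upwards [ae_restrict_mem measurableSet_Ioo] with u hu
  exact Fmono P hNat F hF j (by linarith [hu.1])

lemma mlin1_le_one (x : ℝ) : mlin1 (F j) x ≤ 1 := by
  rw [mlin1_eq P hNat F hF j]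
  have h1 : ∫ u, F j (x + u) ∂(volume.restrict (Set.Ioo (0:ℝ) 1))
      ≤ ∫ _u, (1:ℝ) ∂(volume.restrict (Set.Ioo (0:ℝ) 1)) :=
    integral_mono (FintOn P hNat F hF j x) (integrable_const _)
      (fun u => Fle1 P hNat F hF j _)
  simpa [measure_univ] using h1

lemma mlin1_nonneg (x : ℝ) : 0 ≤ mlin1 (F j) x :=
  le_trans (Fnonneg P hNat F hF j x) (mlin1_ge P hNat F hF j x)

lemma mlin1_interval (x : ℝ) :
    mlin1 (F j) x = (∫ t in (0:ℝ)..(x+1), F j t) - ∫ t in (0:ℝ)..x, F j t := by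
  have hII : ∀ a b : ℝ, IntervalIntegrable (F j) volume a b :=
    fun a b => (Fmono P hNat F hF j).intervalIntegrable
  rw [mlin1_eq P hNat F hF j]
  have h1 : ∫ u, F j (x + u) ∂(volume.restrict (Set.Ioo (0:ℝ) 1))
      = ∫ u in (0:ℝ)..1, F j (x + u) := by
    rw [intervalIntegral.integral_of_le zero_le_one]
    exact setIntegral_congr_set Ioo_ae_eq_Ioc
  rw [h1, intervalIntegral.integral_comp_add_left (fun t => F j t) x, add_zero,
    ← intervalIntegral.integral_interval_sub_left (hII 0 (x+1)) (hII 0 x)]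

lemma mlin1_cont : Continuous (mlin1 (F j)) := by
  have hII : ∀ a b : ℝ, IntervalIntegrable (F j) volume a b :=
    fun a b => (Fmono P hNat F hF j).intervalIntegrable
  have hc : Continuous fun x : ℝ =>
      (∫ t in (0:ℝ)..(x+1), F j t) - ∫ t in (0:ℝ)..x, F j t :=
    ((intervalIntegral.continuous_primitive hII 0).comp
      (continuous_id.add continuous_const)).sub
      (intervalIntegral.continuous_primitive hII 0)
  exact hc.congr fun x => (mlin1_interval P hNat F hF j x).symm

lemma mlin1_zero (x : ℝ) (hx : x ≤ -1) : mlin1 (F j) x = 0 := by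
  rw [mlin1_eq P hNat F hF j]
  have h : (fun u => F j (x + u)) =ᵐ[volume.restrict (Set.Ioo (0:ℝ) 1)] 0 := by
    filter_upwards [ae_restrict_mem measurableSet_Ioo] with u hu
    exact Fzero P hNat F hF j _ (by linarith [hu.2])
  rw [integral_congr_ae h]; simp

lemma mlin1_atBot : Tendsto (mlin1 (F j)) atBot (𝓝 0) := by
  refine tendsto_const_nhds.congr' ?_
  filter_upwards [eventually_le_atBot (-1 : ℝ)] with x hx
  exact (mlin1_zero P hNat F hF j x hx).symm

lemma F_atTop : Tendsto (F j) atTop (𝓝 1) := by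
  have hs : Monotone (fun t : ℝ => {ω | X ω j ≤ t}) := fun a b hab ω h => le_trans h hab
  have hU : ⋃ t : ℝ, {ω | X ω j ≤ t} = Set.univ := by
    rw [Set.eq_univ_iff_forall]
    exact fun ω => Set.mem_iUnion.2 ⟨X ω j, by simp⟩
  have h1 := tendsto_measure_iUnion_atTop (μ := P) hs
  rw [hU, measure_univ] at h1
  have h2 := (ENNReal.tendsto_toReal ENNReal.one_ne_top).comp h1
  simp only [ENNReal.toReal_one] at h2
  exact h2.congr fun t => (hF j t).symm

lemma mlin1_atTop : Tendsto (mlin1 (F j)) atTop (𝓝 1) :=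
  tendsto_of_tendsto_of_tendsto_of_le_of_le (F_atTop P hNat F hF j) tendsto_const_nhds
    (fun x => mlin1_ge P hNat F hF j x) (fun x => mlin1_le_one P hNat F hF j x)

end F

lemma part3 (hX : Measurable X) (hNat : ∀ ω j, ∃ k : ℕ, X ω j = k)
    (H : (Fin d → ℝ) → ℝ) (F : Fin d → ℝ → ℝ)
    (hH : ∀ x, H x = (P {ω | ∀ j, X ω j ≤ x j}).toReal)
    (hF : ∀ j x, F j x = (P {ω | X ω j ≤ x}).toReal) (x : Fin d → ℝ) :
    mlin d H x = mlinCopula d H F (fun j => mlin1 (F j) (x j)) := by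
  set ν : Measure (Fin d → ℝ) := Measure.pi fun _ : Fin d => volume.restrict (Set.Ioo (0:ℝ) 1)
    with hν
  set μ : Measure (Ω × (Fin d → ℝ)) := P.prod ν with hμ
  set y : Fin d → ℝ := fun j => genInv (mlin1 (F j)) (mlin1 (F j) (x j)) with hy
  have hGy : ∀ j, mlin1 (F j) (y j) = mlin1 (F j) (x j) := by
    intro j
    by_cases hc : mlin1 (F j) (x j) = 0
    · have hyj : y j = -1 := by simp [hy, genInv, hc]
      rw [hyj, mlin1_zero P hNat F hF j (-1) le_rfl, hc]
    · have hcpos : 0 < mlin1 (F j) (x j) :=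
        lt_of_le_of_ne (mlin1_nonneg P hNat F hF j (x j)) (Ne.symm hc)
      have hyj : y j = sInf {t | mlin1 (F j) (x j) ≤ mlin1 (F j) t} := by
        simp [hy, genInv, hc]
      have hclosed : IsClosed {t | mlin1 (F j) (x j) ≤ mlin1 (F j) t} :=
        isClosed_le continuous_const (mlin1_cont P hNat F hF j)
      have hne : x j ∈ {t | mlin1 (F j) (x j) ≤ mlin1 (F j) t} := by
        show mlin1 (F j) (x j) ≤ mlin1 (F j) (x j); exact le_refl _
      have hbdd : BddBelow {t | mlin1 (F j) (x j) ≤ mlin1 (F j) t} := by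
        have hev : ∀ᶠ t in atBot, mlin1 (F j) t < mlin1 (F j) (x j) :=
          (tendsto_order.1 (mlin1_atBot P hNat F hF j)).2 _ hcpos
        obtain ⟨t₀, ht₀⟩ := eventually_atBot.1 hev
        refine ⟨t₀, fun t ht => ?_⟩
        by_contra hlt
        exact absurd ht (not_le.2 (ht₀ t (le_of_lt (not_le.1 hlt))))
      have hmem : sInf {t | mlin1 (F j) (x j) ≤ mlin1 (F j) t}
          ∈ {t | mlin1 (F j) (x j) ≤ mlin1 (F j) t} :=
        hclosed.csInf_mem ⟨x j, hne⟩ hbdd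
      have h1 : mlin1 (F j) (x j) ≤ mlin1 (F j) (y j) := by rw [hyj]; exact hmem
      have h2 : y j ≤ x j := by rw [hyj]; exact csInf_le hbdd hne
      exact le_antisymm (mlin1_mono P hNat F hF j h2) h1
  set B : Fin d → ℝ → Set (Ω × (Fin d → ℝ)) :=
    fun j t => {p | X p.1 j + p.2 j - 1 ≤ t} with hB
  have hmB : ∀ j t, MeasurableSet (B j t) := fun j t =>
    measurableSet_le ((((measurable_pi_apply j).comp (hX.comp measurable_fst)).add
      ((measurable_pi_apply j).comp measurable_snd)).sub measurable_const) measurable_const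
  have hBmono : ∀ j {s t : ℝ}, s ≤ t → B j s ⊆ B j t :=
    fun j s t hst p hp => le_trans hp hst
  have hμB : ∀ j t, (μ (B j t)).toReal = mlin1 (F j) t :=
    fun j t => (part1_margin P hX F hF j t).symm
  have hBeq : ∀ j, μ (B j (x j)) = μ (B j (y j)) := by
    intro j
    refine (ENNReal.toReal_eq_toReal_iff' (measure_ne_top μ _) (measure_ne_top μ _)).1 ?_
    rw [hμB, hμB, hGy j]
  have hdiff : ∀ j (s t : ℝ), μ (B j s) = μ (B j t) → s ≤ t → μ (B j t \ B j s) = 0 := by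
    intro j s t hst hle
    rw [measure_diff (hBmono j hle) (hmB j s).nullMeasurableSet (measure_ne_top μ _), hst,
      tsub_self]
  have hnull : ∀ a b : Fin d → ℝ, (∀ j, μ (B j (a j)) = μ (B j (b j))) →
      μ ({p | ∀ j, X p.1 j + p.2 j - 1 ≤ a j} \ {p | ∀ j, X p.1 j + p.2 j - 1 ≤ b j}) = 0 := by
    intro a b hab
    refine measure_mono_null (fun p hp => ?_)
      (measure_iUnion_null
        (s := fun j : Fin d => B j (max (a j) (b j)) \ B j (min (a j) (b j))) fun j => ?_)
    · rcases hp with ⟨h1, h2⟩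
      simp only [Set.mem_setOf_eq, not_forall] at h2
      obtain ⟨j, hj⟩ := h2
      refine Set.mem_iUnion.2 ⟨j, ?_⟩
      exact ⟨le_trans (h1 j) (le_max_left _ _), fun hmem => hj (le_trans hmem (min_le_right _ _))⟩
    · show μ (B j (max (a j) (b j)) \ B j (min (a j) (b j))) = 0
      rcases le_total (a j) (b j) with h | h
      · rw [max_eq_right h, min_eq_left h]
        exact hdiff j (a j) (b j) (hab j) h
      · rw [max_eq_left h, min_eq_right h]
        exact hdiff j (b j) (a j) (hab j).symm h
  have hμeq : μ {p | ∀ j, X p.1 j + p.2 j - 1 ≤ x j} = μ {p | ∀ j, X p.1 j + p.2 j - 1 ≤ y j} := by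
    have hxy := hnull x y fun j => hBeq j
    have hyx := hnull y x fun j => (hBeq j).symm
    refine le_antisymm ?_ ?_
    · calc μ {p | ∀ j, X p.1 j + p.2 j - 1 ≤ x j}
          ≤ μ ({p | ∀ j, X p.1 j + p.2 j - 1 ≤ y j}
              ∪ ({p | ∀ j, X p.1 j + p.2 j - 1 ≤ x j}
                \ {p | ∀ j, X p.1 j + p.2 j - 1 ≤ y j})) := by
            refine measure_mono fun p hp => ?_
            by_cases h : p ∈ {p | ∀ j, X p.1 j + p.2 j - 1 ≤ y j}
            exacts [Or.inl h, Or.inr ⟨hp, h⟩]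
        _ ≤ _ + _ := measure_union_le _ _
        _ = μ {p | ∀ j, X p.1 j + p.2 j - 1 ≤ y j} := by rw [hxy, add_zero]
    · calc μ {p | ∀ j, X p.1 j + p.2 j - 1 ≤ y j}
          ≤ μ ({p | ∀ j, X p.1 j + p.2 j - 1 ≤ x j}
              ∪ ({p | ∀ j, X p.1 j + p.2 j - 1 ≤ y j}
                \ {p | ∀ j, X p.1 j + p.2 j - 1 ≤ x j})) := by
            refine measure_mono fun p hp => ?_
            by_cases h : p ∈ {p | ∀ j, X p.1 j + p.2 j - 1 ≤ x j}
            exacts [Or.inl h, Or.inr ⟨hp, h⟩]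
        _ ≤ _ + _ := measure_union_le _ _
        _ = μ {p | ∀ j, X p.1 j + p.2 j - 1 ≤ x j} := by rw [hyx, add_zero]
  show mlin d H x = mlin d H _
  rw [part1_joint P hX H hH x, part1_joint P hX H hH y, ← hν, ← hμ, hμeq]

end Main

/-- Proposition 2.2: if `U₁,…,U_d` are i.i.d. uniform on `(0,1)`,
independent of the `ℕ^d`-valued vector `(X₁,…,X_d)` with distribution function `H`, then
(i) `H^⊞` is the joint distribution function of `(X₁+U₁−1,…,X_d+U_d−1)`, with `j`-th margin
`F_j^⊞`; (ii) each `F_j^⊞` is a continuous distribution function; and (iii) for every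
`x ∈ ℝ^d`, `H^⊞(x) = C^⊞(F₁^⊞(x₁),…,F_d^⊞(x_d))`. -/
theorem multilinear_extension_is_df_of_jittered_vector
    {Ω : Type*} [MeasurableSpace Ω] (P : Measure Ω) [IsProbabilityMeasure P]
    (d : ℕ) (hd : 1 ≤ d) (X : Ω → Fin d → ℝ) (hX : Measurable X)
    (hNat : ∀ ω j, ∃ k : ℕ, X ω j = k)
    (H : (Fin d → ℝ) → ℝ) (F : Fin d → ℝ → ℝ)
    (hH : ∀ x, H x = (P {ω | ∀ j, X ω j ≤ x j}).toReal)
    (hF : ∀ j x, F j x = (P {ω | X ω j ≤ x}).toReal) :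
    -- (i) `H^⊞` is the joint df of `(X₁+U₁−1,…,X_d+U_d−1)` and its margins are the `F_j^⊞`,
    -- where the `U_j` are i.i.d. uniform on `(0,1)`, independent of `X`, realized on the
    -- product space `Ω × (0,1)^d`:
    (∀ x : Fin d → ℝ,
      mlin d H x
        = ((P.prod (Measure.pi fun _ : Fin d => volume.restrict (Set.Ioo (0:ℝ) 1)))
            {p : Ω × (Fin d → ℝ) | ∀ j, X p.1 j + p.2 j - 1 ≤ x j}).toReal)
    ∧ (∀ (j : Fin d) (x : ℝ),
      mlin1 (F j) x
        = ((P.prod (Measure.pi fun _ : Fin d => volume.restrict (Set.Ioo (0:ℝ) 1)))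
            {p : Ω × (Fin d → ℝ) | X p.1 j + p.2 j - 1 ≤ x}).toReal)
    -- (ii) each `F_j^⊞` is a continuous distribution function:
    ∧ (∀ j : Fin d, Continuous (mlin1 (F j)) ∧ Monotone (mlin1 (F j)) ∧
        Tendsto (mlin1 (F j)) atBot (𝓝 0) ∧ Tendsto (mlin1 (F j)) atTop (𝓝 1))
    -- (iii) Sklar-type representation for `H^⊞`:
    ∧ (∀ x : Fin d → ℝ,
        mlin d H x = mlinCopula d H F (fun j => mlin1 (F j) (x j))) := by
  exact ⟨fun x => part1_joint P hX H hH x,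
    fun j x => part1_margin P hX F hF j x,
    fun j => ⟨mlin1_cont P hNat F hF j, mlin1_mono P hNat F hF j,
      mlin1_atBot P hNat F hF j, mlin1_atTop P hNat F hF j⟩,
    fun x => part3 P hX hNat H F hH hF x⟩
end
end

section
/- The multilinear extension copula satisfies Sklar's representation: for all (x₁,…,x_d) ∈ ℝ^d, H(x₁,…,x_d) = C^⊞(F₁(x₁),…,F_d(x_d)). -/
open MeasureTheory Filter Topology

noncomputable section

/-!
For ℕ-valued margins, `F^⊞` is the piecewise-linear interpolation of `F` between consecutive
integers, so `F^⊞⁻¹(F(x))` is the least integer `n` with `F(n) = F(x)`, or `-1` if `F(x) = 0`.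
In both cases `F(F^⊞⁻¹(F(x)) + u) = F(x)` for `0 < u < 1`. Writing `y_j = F_j^⊞⁻¹(F_j(x_j))`,
the events `{X_j ≤ y_j + u_j}` and `{X_j ≤ x_j}` are nested with equal probability, hence a.e.
equal, so `H(y + u) = H(x)` on the open unit cube and averaging over the cube gives
`H^⊞(y) = H(x)`.
-/

open Set

section StepFunction

variable {F : ℝ → ℝ}

lemma mlin1_eq_interpolation (hF : ∀ t, F t = F ⌊t⌋) (z : ℝ) :
    mlin1 F z = (⌊z⌋ + 1 - z) * F ⌊z⌋ + (z - ⌊z⌋) * F (⌊z⌋ + 1) := by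
  set c : ℝ := ⌊z⌋ + 1 - z
  have hc0 : 0 < c := by linarith [Int.lt_floor_add_one z]
  have hc1 : c ≤ 1 := by linarith [Int.floor_le z]
  have h_left : EqOn (fun u => F (z + u)) (fun _ => F ⌊z⌋) (Ico 0 c) := fun u hu => by
    dsimp only
    rw [hF (z + u), Int.floor_eq_iff.2 ⟨by linarith [Int.floor_le z, hu.1], by linarith [hu.2]⟩]
  have h_right : EqOn (fun u => F (z + u)) (fun _ => F (⌊z⌋ + 1)) (Ico c 1) := fun u hu => by
    have hfloor : ⌊z + u⌋ = ⌊z⌋ + 1 := Int.floor_eq_iff.2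
      ⟨by push_cast; linarith [hu.1], by push_cast; linarith [hu.2, Int.floor_le z]⟩
    simp only [hF (z + u), hfloor, Int.cast_add, Int.cast_one]
  have int_left : IntegrableOn (fun u => F (z + u)) (Ico 0 c) :=
    (integrableOn_const measure_Ico_lt_top.ne).congr_fun h_left.symm measurableSet_Ico
  have int_right : IntegrableOn (fun u => F (z + u)) (Ico c 1) :=
    (integrableOn_const measure_Ico_lt_top.ne).congr_fun h_right.symm measurableSet_Ico
  rw [mlin1, integral_Icc_eq_integral_Ico, ← Ico_union_Ico_eq_Ico hc0.le hc1,
    setIntegral_union Ico_disjoint_Ico_same measurableSet_Ico int_left int_right,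
    setIntegral_congr_fun measurableSet_Ico h_left, setIntegral_congr_fun measurableSet_Ico h_right,
    setIntegral_const, setIntegral_const, Real.volume_real_Ico_of_le hc0.le,
    Real.volume_real_Ico_of_le hc1, smul_eq_mul, smul_eq_mul]
  ring

variable (hmono : Monotone F) (hF : ∀ t, F t = F ⌊t⌋) (hneg : ∀ t < 0, F t = 0)
include hmono hF hneg

lemma genInv_mlin1_of_pos {x : ℝ} (hx : 0 < F x) :
    ∃ n : ℕ, genInv (mlin1 F) (F x) = n ∧ F n = F x := by
  classical
  have hx0 : 0 ≤ x := not_lt.1 fun h => hx.ne' (hneg x h)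
  have hfloor : F x = F ⌊x⌋₊ := by rw [natCast_floor_eq_intCast_floor hx0, ← hF]
  have hex : ∃ n : ℕ, F x ≤ F n := ⟨⌊x⌋₊, hfloor.le⟩
  set n := Nat.find hex
  have hn_le : (n : ℝ) ≤ x :=
    (Nat.cast_le.2 (Nat.find_min' hex hfloor.le)).trans (Nat.floor_le hx0)
  have hFn : F n = F x := le_antisymm (hmono hn_le) (Nat.find_spec hex)
  have below : ∀ m : ℤ, m < n → F m < F x := by
    intro m hm
    rcases lt_or_ge m 0 with hm0 | hm0
    · rw [hneg _ (by exact_mod_cast hm0)]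
      exact hx
    · have := Nat.find_min hex (m := m.toNat) (by omega)
      rwa [not_le, ← Int.cast_natCast, Int.toNat_of_nonneg hm0] at this
  have least : IsLeast {z | F x ≤ mlin1 F z} n := by
    refine ⟨by simp [mlin1_eq_interpolation hF, hFn], fun z hz => not_lt.1 fun hzn => ?_⟩
    suffices mlin1 F z < F x from this.not_ge hz
    have hm : ⌊z⌋ < n := Int.floor_lt.2 (by exact_mod_cast hzn)
    have h_lo := below _ hm
    have h_hi : F (⌊z⌋ + 1) ≤ F x := hFn ▸ hmono (by exact_mod_cast hm)
    -- a convex combination with positive weight on the value `F ⌊z⌋ < F x`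
    rw [mlin1_eq_interpolation hF]
    nlinarith [Int.lt_floor_add_one z, Int.floor_le z]
  exact ⟨n, by rw [genInv, if_neg hx.ne', least.csInf_eq], hFn⟩

lemma apply_genInv_mlin1_add (x : ℝ) {v : ℝ} (hv : v ∈ Ioo (0 : ℝ) 1) :
    F (genInv (mlin1 F) (F x) + v) = F x := by
  have hx : 0 ≤ F x := by
    rcases lt_or_ge x 0 with h | h
    · exact (hneg x h).ge
    · exact (hneg (-1) (by norm_num)).symm.le.trans (hmono (by linarith))
  rcases hx.eq_or_lt with hx | hx
  · rw [← hx, genInv, if_pos rfl, hneg _ (by linarith [hv.2])]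
  · obtain ⟨n, hn, hFn⟩ := genInv_mlin1_of_pos hmono hF hneg hx
    have hfloor : ⌊(n : ℝ) + v⌋ = n := Int.floor_eq_iff.2
      ⟨by push_cast; linarith [hv.1], by push_cast; linarith [hv.2]⟩
    rw [hn, hF, hfloor, Int.cast_natCast, hFn]

end StepFunction

section NatValued

variable {Ω : Type*} {Y : Ω → ℝ}

lemma setOf_le_floor (hY : ∀ ω, ∃ k : ℕ, Y ω = k) (t : ℝ) :
    {ω | Y ω ≤ t} = {ω | Y ω ≤ ⌊t⌋} := by
  ext ω
  obtain ⟨k, hk⟩ := hY ω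
  simp only [mem_ofPred_eq, hk]
  rw [← Int.cast_natCast, Int.cast_le, Int.le_floor]

lemma setOf_le_eq_empty_of_neg (hY : ∀ ω, ∃ k : ℕ, Y ω = k) {t : ℝ} (ht : t < 0) :
    {ω | Y ω ≤ t} = ∅ := by
  ext ω
  obtain ⟨k, hk⟩ := hY ω
  simp only [mem_ofPred_eq, hk, mem_empty_iff_false, iff_false, not_le]
  exact ht.trans_le k.cast_nonneg

variable [MeasurableSpace Ω] {μ : Measure Ω} [IsFiniteMeasure μ]

lemma apply_genInv_mlin1_add_of_natValued (hY : ∀ ω, ∃ k : ℕ, Y ω = k) {G : ℝ → ℝ}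
    (hG : ∀ t, G t = (μ {ω | Y ω ≤ t}).toReal) (x : ℝ) {v : ℝ} (hv : v ∈ Ioo (0 : ℝ) 1) :
    G (genInv (mlin1 G) (G x) + v) = G x :=
  apply_genInv_mlin1_add
    (fun _ _ hab => by
      simp only [hG]
      exact ENNReal.toReal_mono (measure_ne_top _ _) (measure_mono fun _ h => le_trans h hab))
    (fun t => by simp only [hG, ← setOf_le_floor hY])
    (fun t ht => by simp [hG, setOf_le_eq_empty_of_neg hY ht])
    x hv

lemma setOf_le_ae_eq_of_measure_eq (hY : Measurable Y) {a b : ℝ}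
    (h : μ {ω | Y ω ≤ a} = μ {ω | Y ω ≤ b}) : {ω | Y ω ≤ a} =ᵐ[μ] {ω | Y ω ≤ b} := by
  wlog hab : a ≤ b generalizing a b
  · exact (this h.symm (le_of_not_ge hab)).symm
  exact ae_eq_of_subset_of_measure_ge (fun _ h => le_trans h hab) h.ge
    (measurableSet_le hY measurable_const).nullMeasurableSet (measure_ne_top _ _)

end NatValued

lemma mlin_eq_of_forall_mem_Ioo {d : ℕ} {H : (Fin d → ℝ) → ℝ} {y : Fin d → ℝ} {c : ℝ}
    (h : ∀ v ∈ univ.pi fun _ => Ioo (0 : ℝ) 1, H (y + v) = c) : mlin d H y = c := by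
  have hae : (univ.pi fun _ => Ioo (0 : ℝ) 1) =ᵐ[volume] Icc (0 : Fin d → ℝ) 1 :=
    Measure.univ_pi_Ioo_ae_eq_Icc
  rw [mlin, ← setIntegral_congr_set hae,
    setIntegral_congr_fun (MeasurableSet.univ_pi fun _ => measurableSet_Ioo) h,
    setIntegral_const, measureReal_def, measure_congr hae, Real.volume_Icc_pi]
  simp

theorem multilinear_copula_sklar_general
    {Ω : Type*} [MeasurableSpace Ω] (P : Measure Ω) [IsProbabilityMeasure P]
    (d : ℕ) (X : Ω → Fin d → ℝ) (hX : Measurable X)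
    (hNat : ∀ ω j, ∃ k : ℕ, X ω j = k)
    (H : (Fin d → ℝ) → ℝ) (F : Fin d → ℝ → ℝ)
    (hH : ∀ x, H x = (P {ω | ∀ j, X ω j ≤ x j}).toReal)
    (hF : ∀ j x, F j x = (P {ω | X ω j ≤ x}).toReal) :
    ∀ x : Fin d → ℝ, H x = mlinCopula d H F (fun j => F j (x j)) := by
  intro x
  refine (mlin_eq_of_forall_mem_Ioo fun v hv => ?_).symm
  have margins : ∀ j, {ω | X ω j ≤ genInv (mlin1 (F j)) (F j (x j)) + v j}
      =ᵐ[P] {ω | X ω j ≤ x j} := fun j => by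
    set y := genInv (mlin1 (F j)) (F j (x j))
    have hj : F j (y + v j) = F j (x j) :=
      apply_genInv_mlin1_add_of_natValued (hNat · j) (hF j) (x j) (hv j trivial)
    rw [hF, hF, ENNReal.toReal_eq_toReal_iff' (measure_ne_top _ _) (measure_ne_top _ _)] at hj
    exact setOf_le_ae_eq_of_measure_eq (measurable_pi_apply j |>.comp hX) hj
  simp only [hH, Pi.add_apply, ofPred_forall]
  rw [measure_congr (EventuallyEq.iInter margins)]

/-- the multilinear extension copula satisfies Sklar's representation:
`H(x₁,…,x_d) = C^⊞(F₁(x₁),…,F_d(x_d))` for all `(x₁,…,x_d) ∈ ℝ^d`. -/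
theorem multilinear_copula_sklar
    {Ω : Type*} [MeasurableSpace Ω] (P : Measure Ω) [IsProbabilityMeasure P]
    (d : ℕ) (hd : 1 ≤ d) (X : Ω → Fin d → ℝ) (hX : Measurable X)
    (hNat : ∀ ω j, ∃ k : ℕ, X ω j = k)
    (H : (Fin d → ℝ) → ℝ) (F : Fin d → ℝ → ℝ)
    (hH : ∀ x, H x = (P {ω | ∀ j, X ω j ≤ x j}).toReal)
    (hF : ∀ j x, F j x = (P {ω | X ω j ≤ x}).toReal) :
    ∀ x : Fin d → ℝ, H x = mlinCopula d H F (fun j => F j (x j)) :=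
  multilinear_copula_sklar_general P d X hX hNat H F hH hF
end
end

section
/- Pearson's chi-squared statistic of a two-way contingency table equals n times the squared L²-distance of the multilinear empirical copula density to 1: ∑_{k=1}^K ∑_{ℓ=1}^L (f_{kℓ} − f_{k+} f_{+ℓ})² / (f_{k+} f_{+ℓ}) = ∫₀¹ ∫₀¹ {ĉ(u,v) − 1}² dv du. -/
open MeasureTheory Filter Topology

noncomputable section

/-! ĉ is a step function on the grid whose cell `(k, ℓ)` has sides `f_{k+}` and `f_{+ℓ}`
and carries the value `f_{kℓ} / (f_{k+} f_{+ℓ})`. Integrating over `v` and then over `u`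
cell by cell turns `∫∫ (ĉ - 1)²` into `∑ f_{k+} f_{+ℓ} (f_{kℓ} / (f_{k+} f_{+ℓ}) - 1)²`,
and each summand is the corresponding Pearson term
`(f_{kℓ} - f_{k+} f_{+ℓ})² / (f_{k+} f_{+ℓ})`. -/

open Set

theorem mul_div_sub_one_sq {𝕜 : Type*} [Field 𝕜] (p x : 𝕜) :
    p * (x / p - 1) ^ 2 = (x - p) ^ 2 / p := by
  rcases eq_or_ne p 0 with rfl | hp
  · simp
  · field_simp

section StepFunction

variable {g : ℝ → ℝ} {a b C : ℝ}

theorem intervalIntegrable_of_eqOn_Ioo (hab : a ≤ b) (h : EqOn g (fun _ => C) (Ioo a b)) :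
    IntervalIntegrable g volume a b := by
  rw [intervalIntegrable_iff_integrableOn_Ioo_of_le hab]
  exact (integrableOn_const (by simp)).congr_fun h.symm measurableSet_Ioo

theorem intervalIntegral_eq_of_eqOn_Ioo (hab : a ≤ b) (h : EqOn g (fun _ => C) (Ioo a b)) :
    ∫ x in a..b, g x = (b - a) * C := by
  rw [intervalIntegral.integral_of_le hab, integral_Ioc_eq_integral_Ioo,
    setIntegral_congr_fun measurableSet_Ioo h, setIntegral_const, Real.volume_real_Ioo_of_le hab,
    smul_eq_mul]

theorem intervalIntegral_eq_sum_of_eqOn_Ioo {n : ℕ} {t : ℕ → ℝ} {C : Fin n → ℝ}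
    (ht : ∀ i : Fin n, t i ≤ t (i + 1))
    (h : ∀ i : Fin n, EqOn g (fun _ => C i) (Ioo (t i) (t (i + 1)))) :
    ∫ x in t 0..t n, g x = ∑ i : Fin n, (t (i + 1) - t i) * C i := by
  rw [← intervalIntegral.sum_integral_adjacent_intervals
      fun i hi => intervalIntegrable_of_eqOn_Ioo (ht ⟨i, hi⟩) (h ⟨i, hi⟩),
    ← Fin.sum_univ_eq_sum_range (fun i => ∫ x in t i..t (i + 1), g x)]
  exact Finset.sum_congr rfl fun i _ => intervalIntegral_eq_of_eqOn_Ioo (ht i) (h i)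

end StepFunction

section CumulativeSum

variable {n : ℕ} (w : Fin n → ℝ)

def cumulativeSum (m : ℕ) : ℝ :=
  ∑ k : Fin n, if (k : ℕ) < m then w k else 0

@[simp]
theorem cumulativeSum_zero : cumulativeSum w 0 = 0 := by
  simp [cumulativeSum]

theorem cumulativeSum_self : cumulativeSum w n = ∑ k, w k := by
  simp [cumulativeSum]

theorem cumulativeSum_succ_sub (k : Fin n) :
    cumulativeSum w (k + 1) - cumulativeSum w k = w k := by
  have hterm : ∀ j : Fin n,
      ((if (j : ℕ) < k + 1 then w j else 0) - if (j : ℕ) < k then w j else 0)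
        = if j = k then w j else 0 := by
    intro j
    split_ifs <;> simp_all [Fin.ext_iff] <;> omega
  simp only [cumulativeSum, ← Finset.sum_sub_distrib, hterm, Finset.sum_ite_eq', Finset.mem_univ,
    if_true]

variable {w}

theorem cumulativeSum_le_succ (hw : 0 ≤ w) (m : ℕ) :
    cumulativeSum w m ≤ cumulativeSum w (m + 1) :=
  Finset.sum_le_sum fun k _ => by
    split_ifs <;> first | exact le_rfl | exact hw k | omega

theorem intervalIntegral_eq_sum_of_eqOn_cumulativeSum (hw : 0 ≤ w) {g : ℝ → ℝ}
    {C : Fin n → ℝ}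
    (h : ∀ i : Fin n, EqOn g (fun _ => C i) (Ioo (cumulativeSum w i) (cumulativeSum w (i + 1)))) :
    ∫ x in 0..∑ i, w i, g x = ∑ i, w i * C i := by
  rw [← cumulativeSum_self, ← cumulativeSum_zero w,
    intervalIntegral_eq_sum_of_eqOn_Ioo (fun i => cumulativeSum_le_succ hw i) h]
  simp only [cumulativeSum_succ_sub]

end CumulativeSum

theorem chiSq_eq_L2_distance_of_copula_density_general
    (K L : ℕ)
    (f : Fin K → Fin L → ℝ) (hf : ∀ k ℓ, 0 ≤ f k ℓ)
    (hsum : ∑ k : Fin K, ∑ ℓ : Fin L, f k ℓ = 1)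
    (frow : Fin K → ℝ) (fcol : Fin L → ℝ)
    (hfrow : ∀ k, frow k = ∑ ℓ : Fin L, f k ℓ)
    (hfcol : ∀ ℓ, fcol ℓ = ∑ k : Fin K, f k ℓ)
    (Frow : ℕ → ℝ) (Fcol : ℕ → ℝ)
    (hFrow : ∀ m, Frow m = ∑ k : Fin K, if (k : ℕ) < m then frow k else 0)
    (hFcol : ∀ m, Fcol m = ∑ ℓ : Fin L, if (ℓ : ℕ) < m then fcol ℓ else 0)
    (c : ℝ → ℝ → ℝ)
    (hc : ∀ (k : Fin K) (ℓ : Fin L) (u v : ℝ),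
      u ∈ Set.Ioo (Frow k) (Frow (k + 1)) → v ∈ Set.Ioo (Fcol ℓ) (Fcol (ℓ + 1)) →
      c u v = f k ℓ / (frow k * fcol ℓ)) :
    ∑ k : Fin K, ∑ ℓ : Fin L, (f k ℓ - frow k * fcol ℓ) ^ 2 / (frow k * fcol ℓ)
      = ∫ u in (0:ℝ)..1, ∫ v in (0:ℝ)..1, (c u v - 1) ^ 2 := by
  obtain rfl : Frow = cumulativeSum frow := funext hFrow
  obtain rfl : Fcol = cumulativeSum fcol := funext hFcol
  have hrow_nonneg : 0 ≤ frow := fun k => hfrow k ▸ Finset.sum_nonneg fun ℓ _ => hf k ℓ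
  have hcol_nonneg : 0 ≤ fcol := fun ℓ => hfcol ℓ ▸ Finset.sum_nonneg fun k _ => hf k ℓ
  have hrow_total : ∑ k, frow k = 1 := by simpa only [hfrow] using hsum
  have hcol_total : ∑ ℓ, fcol ℓ = 1 := by
    simpa only [hfcol, Finset.sum_comm (γ := Fin L)] using hsum
  have hinner : ∀ k : Fin K, EqOn (fun u => ∫ v in (0:ℝ)..1, (c u v - 1) ^ 2)
      (fun _ => ∑ ℓ, fcol ℓ * (f k ℓ / (frow k * fcol ℓ) - 1) ^ 2)
      (Ioo (cumulativeSum frow k) (cumulativeSum frow (k + 1))) := fun k u hu => by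
    have := intervalIntegral_eq_sum_of_eqOn_cumulativeSum hcol_nonneg
      (g := fun v => (c u v - 1) ^ 2) (C := fun ℓ => (f k ℓ / (frow k * fcol ℓ) - 1) ^ 2)
      fun ℓ v hv => by simp only [hc k ℓ u v hu hv]
    rwa [hcol_total] at this
  have houter := intervalIntegral_eq_sum_of_eqOn_cumulativeSum hrow_nonneg hinner
  rw [hrow_total] at houter
  simp only [houter, Finset.mul_sum, ← mul_assoc, mul_div_sub_one_sq]

/-- Pearson's chi-squared statistic of a `K × L` table of relative
frequencies equals the squared `L²`-distance of the multilinear empirical copula density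
to `1`:
`∑_k ∑_ℓ (f_{kℓ} − f_{k+} f_{+ℓ})²/(f_{k+} f_{+ℓ}) = ∫₀¹∫₀¹ (ĉ(u,v) − 1)² dv du`,
where `ĉ(u,v) = f_{kℓ}/(f_{k+} f_{+ℓ})` on `(F_{(k−1)+}, F_{k+}) × (F_{+(ℓ−1)}, F_{+ℓ})`. -/
theorem chiSq_eq_L2_distance_of_copula_density
    (K L : ℕ) (hK : 1 ≤ K) (hL : 1 ≤ L)
    (f : Fin K → Fin L → ℝ) (hf : ∀ k ℓ, 0 ≤ f k ℓ)
    (hsum : ∑ k : Fin K, ∑ ℓ : Fin L, f k ℓ = 1)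
    (frow : Fin K → ℝ) (fcol : Fin L → ℝ)
    (hfrow : ∀ k, frow k = ∑ ℓ : Fin L, f k ℓ)
    (hfcol : ∀ ℓ, fcol ℓ = ∑ k : Fin K, f k ℓ)
    (hrowpos : ∀ k, 0 < frow k) (hcolpos : ∀ ℓ, 0 < fcol ℓ)
    (Frow : ℕ → ℝ) (Fcol : ℕ → ℝ)
    (hFrow : ∀ m, Frow m = ∑ k : Fin K, if (k : ℕ) < m then frow k else 0)
    (hFcol : ∀ m, Fcol m = ∑ ℓ : Fin L, if (ℓ : ℕ) < m then fcol ℓ else 0)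
    (c : ℝ → ℝ → ℝ)
    (hc : ∀ (k : Fin K) (ℓ : Fin L) (u v : ℝ),
      u ∈ Set.Ioo (Frow k) (Frow (k + 1)) → v ∈ Set.Ioo (Fcol ℓ) (Fcol (ℓ + 1)) →
      c u v = f k ℓ / (frow k * fcol ℓ)) :
    ∑ k : Fin K, ∑ ℓ : Fin L, (f k ℓ - frow k * fcol ℓ) ^ 2 / (frow k * fcol ℓ)
      = ∫ u in (0:ℝ)..1, ∫ v in (0:ℝ)..1, (c u v - 1) ^ 2 :=
  chiSq_eq_L2_distance_of_copula_density_general K L f hf hsum frow fcol hfrow hfcol Frow Fcol hFrow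
    hFcol c hc
end
end

section
/- Let Z_n (n ∈ ℕ) and Z be real-valued random variables, with the Z_n defined on a probability space (Ω, 𝔉, P) and Z defined on a probability space (Ω′, 𝔉′, P′). Suppose that for all δ > 0 and ε > 0 there exist real-valued random variables Y_{n,δ,ε} on (Ω, 𝔉, P) and Y_{δ,ε} on (Ω′, 𝔉′, P′) such that (i) for all n ∈ ℕ, P(|Z_n − Y_{n,δ,ε}| > δ) < ε; (ii) Y_{n,δ,ε} converges in distribution to Y_{δ,ε} as n → ∞; and (iii) P′(|Z − Y_{δ,ε}| > δ) < ε. Then Z_n converges in distribution to Z as n → ∞. -/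
/-!
Convergence in distribution of real random variables is convergence of their laws in the
Lévy–Prokhorov metric. Closeness in probability, `P (δ < |X - Y|) ≤ ε`, puts the laws of `X` and
`Y` within Lévy–Prokhorov distance `max δ ε`. So for every `η > 0` the laws of `Z n` stay within
`η` of those of `Y n`, which converge to the law of `Ylim`, itself within `η` of the law of `Zlim`;
the triangle inequality in the metric space of laws concludes.
-/

open MeasureTheory Filter Topology

noncomputable section

/-- Convergence in distribution: the laws converge weakly, i.e. integrals of bounded
continuous functions converge. -/
def ConvInDist {Ω Ω' : Type*} [MeasurableSpace Ω] [MeasurableSpace Ω']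
    (P : Measure Ω) (P' : Measure Ω') (W : ℕ → Ω → ℝ) (Wlim : Ω' → ℝ) : Prop :=
  ∀ f : BoundedContinuousFunction ℝ ℝ,
    Tendsto (fun n => ∫ ω, f (W n ω) ∂P) atTop (𝓝 (∫ ω, f (Wlim ω) ∂P'))

theorem Metric.tendsto_of_forall_approx {α ι : Type*} [PseudoMetricSpace α] {l : Filter ι}
    {x : ι → α} {a : α}
    (h : ∀ η > 0, ∃ (y : ι → α) (b : α),
      Tendsto y l (𝓝 b) ∧ (∀ᶠ i in l, dist (x i) (y i) ≤ η) ∧ dist b a ≤ η) :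
    Tendsto x l (𝓝 a) := by
  refine Metric.tendsto_nhds.2 fun ε hε => ?_
  obtain ⟨y, b, hyb, hxy, hba⟩ := h (ε / 3) (by positivity)
  filter_upwards [Metric.tendsto_nhds.1 hyb (ε / 3) (by positivity), hxy] with i hyi hxyi
  calc dist (x i) a ≤ dist (x i) (y i) + dist (y i) b + dist b a := dist_triangle4 _ _ _ _
    _ < ε := by linarith

namespace ProbabilityTheory

variable {Ω E : Type*} [MeasurableSpace Ω]

def law [MeasurableSpace E] (P : Measure Ω) [IsProbabilityMeasure P] {X : Ω → E}
    (hX : AEMeasurable X P) : ProbabilityMeasure E :=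
  ⟨P.map X, Measure.isProbabilityMeasure_map hX⟩

theorem levyProkhorovDist_map_le_max [PseudoMetricSpace E] [MeasurableSpace E]
    [OpensMeasurableSpace E] (P : Measure Ω) [IsProbabilityMeasure P] {X Y : Ω → E}
    (hX : AEMeasurable X P) (hY : AEMeasurable Y P) {δ ε : ℝ} (hδ : 0 ≤ δ)
    (h : P {ω | δ < dist (X ω) (Y ω)} ≤ ENNReal.ofReal ε) :
    levyProkhorovDist (P.map X) (P.map Y) ≤ max δ ε := by
  have := Measure.isProbabilityMeasure_map hX
  have := Measure.isProbabilityMeasure_map hY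
  refine levyProkhorovDist_le_of_forall_le _ _ (hδ.trans (le_max_left δ ε)) fun r B hr hB => ?_
  rw [Measure.map_apply_of_aemeasurable hX hB,
    Measure.map_apply_of_aemeasurable hY Metric.isOpen_thickening.measurableSet]
  have hsub : X ⁻¹' B ⊆ Y ⁻¹' Metric.thickening r B ∪ {ω | δ < dist (X ω) (Y ω)} := by
    intro ω hω
    by_cases hfar : δ < dist (X ω) (Y ω)
    · exact Or.inr hfar
    · refine Or.inl (Metric.mem_thickening_iff.2 ⟨X ω, hω, ?_⟩)
      rw [dist_comm]
      exact (not_lt.1 hfar).trans_lt ((le_max_left δ ε).trans_lt hr)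
  calc P (X ⁻¹' B) ≤ P (Y ⁻¹' Metric.thickening r B) + P {ω | δ < dist (X ω) (Y ω)} :=
        (measure_mono hsub).trans (measure_union_le _ _)
    _ ≤ P (Y ⁻¹' Metric.thickening r B) + ENNReal.ofReal r := by
        gcongr
        exact h.trans (ENNReal.ofReal_le_ofReal ((le_max_right δ ε).trans hr.le))

theorem convInDist_iff_tendsto_law {Ω' : Type*} [MeasurableSpace Ω'] (P : Measure Ω)
    (P' : Measure Ω') [IsProbabilityMeasure P] [IsProbabilityMeasure P'] {W : ℕ → Ω → ℝ}
    {Wlim : Ω' → ℝ} (hW : ∀ n, AEMeasurable (W n) P) (hWlim : AEMeasurable Wlim P') :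
    ConvInDist P P' W Wlim ↔
      Tendsto (fun n => law P (hW n)) atTop (𝓝 (law P' hWlim)) := by
  rw [ProbabilityMeasure.tendsto_iff_forall_integral_tendsto]
  refine forall_congr' fun f => ?_
  simp only [law, ProbabilityMeasure.coe_mk,
    integral_map (hW _) f.continuous.aestronglyMeasurable,
    integral_map hWlim f.continuous.aestronglyMeasurable]

end ProbabilityTheory

open ProbabilityTheory LevyProkhorov

/-- Lemma C.1: if `Z_n` can be approximated in probability, uniformly in
`n`, by random variables `Y_{n,δ,ε}` converging in distribution to `Y_{δ,ε}`, which in turn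
approximate `Z` in probability, then `Z_n` converges in distribution to `Z`. -/
theorem convInDist_of_approximation
    {Ω Ω' : Type*} [MeasurableSpace Ω] [MeasurableSpace Ω']
    (P : Measure Ω) (P' : Measure Ω')
    [IsProbabilityMeasure P] [IsProbabilityMeasure P']
    (Z : ℕ → Ω → ℝ) (Zlim : Ω' → ℝ)
    (hZ : ∀ n, Measurable (Z n)) (hZlim : Measurable Zlim)
    (happrox : ∀ δ > (0:ℝ), ∀ ε > (0:ℝ),
      ∃ (Y : ℕ → Ω → ℝ) (Ylim : Ω' → ℝ),
        (∀ n, Measurable (Y n)) ∧ Measurable Ylim ∧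
        (∀ n, P {ω | δ < |Z n ω - Y n ω|} < ENNReal.ofReal ε) ∧
        ConvInDist P P' Y Ylim ∧
        P' {ω | δ < |Zlim ω - Ylim ω|} < ENNReal.ofReal ε) :
    ConvInDist P P' Z Zlim := by
  rw [convInDist_iff_tendsto_law P P' (fun n => (hZ n).aemeasurable) hZlim.aemeasurable,
    probabilityMeasureHomeomorph.isInducing.tendsto_nhds_iff]
  refine Metric.tendsto_of_forall_approx fun η hη => ?_
  obtain ⟨Y, Ylim, hY, hYlim, hZY, hYconv, hZYlim⟩ := happrox η hη η hη
  simp only [← Real.dist_eq] at hZY hZYlim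
  refine ⟨fun n => ofMeasure (law P (hY n).aemeasurable), ofMeasure (law P' hYlim.aemeasurable),
    ?_, .of_forall fun n => ?_, ?_⟩
  · rwa [convInDist_iff_tendsto_law P P' (fun n => (hY n).aemeasurable) hYlim.aemeasurable,
      probabilityMeasureHomeomorph.isInducing.tendsto_nhds_iff] at hYconv
  · exact (levyProkhorovDist_map_le_max P (hZ n).aemeasurable (hY n).aemeasurable hη.le
      (hZY n).le).trans_eq (max_self η)
  · rw [dist_comm]
    exact (levyProkhorovDist_map_le_max P' hZlim.aemeasurable hYlim.aemeasurable hη.le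
      hZYlim.le).trans_eq (max_self η)
end
end

section
/- For d = 2 and any points x₁,…,x_n ∈ ℕ², Spearman's rho statistic based on mid-ranks admits the copula representation ρ_n = (12/n³) ∑_{i=1}^n (R_{i1} − (n+1)/2)(R_{i2} − (n+1)/2) = 12 ∫₀¹ ∫₀¹ {Ĉ_n^⊞(u,v) − uv} dv du, where for j ∈ {1,2}, R_{ij} = ∑_{m=1}^n 1{x_{mj} < x_{ij}} + (1/2)(∑_{m=1}^n 1{x_{mj} = x_{ij}} + 1) is the mid-rank of x_{ij} among x_{1j},…,x_{nj}. -/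
open MeasureTheory Filter Topology

noncomputable section

/-- Empirical distribution function of the points `x₁,…,x_n ∈ ℕ^d`. -/
def empDF (d n : ℕ) (x : Fin n → Fin d → ℕ) (y : Fin d → ℝ) : ℝ :=
  (n : ℝ)⁻¹ * ∑ i : Fin n, if ∀ j, (x i j : ℝ) ≤ y j then (1:ℝ) else 0

/-- Empirical marginal distribution function of the `j`-th coordinates. -/
def empMargin (d n : ℕ) (x : Fin n → Fin d → ℕ) (j : Fin d) (t : ℝ) : ℝ :=
  (n : ℝ)⁻¹ * ∑ i : Fin n, if (x i j : ℝ) ≤ t then (1:ℝ) else 0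

/-- The mid-rank `R_{ij}` of `x_{ij}` among `x_{1j},…,x_{nj}`:
`R_{ij} = ∑_m 1{x_{mj} < x_{ij}} + (1/2)(∑_m 1{x_{mj} = x_{ij}} + 1)`. -/
def midRank (n : ℕ) (x : Fin n → Fin 2 → ℕ) (i : Fin n) (j : Fin 2) : ℝ :=
  ((Finset.univ.filter (fun m : Fin n => x m j < x i j)).card : ℝ)
    + (1 / 2) * (((Finset.univ.filter (fun m : Fin n => x m j = x i j)).card : ℝ) + 1)

/-!
The multilinear extension of a step `1{c ≤ ·}` is the ramp `s ↦ min 1 (max 0 (s + 1 - c))`,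
so `Ĉ_n^⊞(u, v) = n⁻¹ ∑ᵢ ramp x_{i1} (Q₁ u) · ramp x_{i2} (Q₂ v)`, where `Q_j` is the
generalized inverse of the continuous, piecewise linear margin `F_{nj}^⊞`. The double integral
therefore factorises into integrals `∫₀¹ ramp k (Q u) du`. Since `F^⊞ (Q u) = u` and `F^⊞` is
affine on `[k - 1, k]`, the integrand is, up to two points, the linear interpolation from
`F^⊞ (k - 1)` to `F^⊞ k`; its integral `1 - (F^⊞ (k - 1) + F^⊞ k) / 2` is
`1/2 - (R - (n + 1)/2)/n` for the mid-rank `R` of `k`. Expanding the product and using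
`∑ᵢ R_{ij} = n (n + 1)/2` gives the formula.
-/

open Set

structure IsContinuousCDFOfBoundedSupport (F : ℝ → ℝ) : Prop where
  monotone : Monotone F
  continuous : Continuous F
  nonneg : ∀ t, 0 ≤ F t
  le_one : ∀ t, F t ≤ 1
  exists_eq_zero : ∃ t, F t = 0
  exists_eq_one : ∃ t, F t = 1

section genInv

variable {F : ℝ → ℝ} {u : ℝ}

lemma genInv_le_iff (hF : IsContinuousCDFOfBoundedSupport F) (hu : u ∈ Ioc 0 1) (t : ℝ) :
    genInv F u ≤ t ↔ u ≤ F t := by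
  obtain ⟨t₀, ht₀⟩ := hF.exists_eq_zero
  obtain ⟨t₁, ht₁⟩ := hF.exists_eq_one
  have hbdd : BddBelow {x | u ≤ F x} := ⟨t₀, fun x (hx : u ≤ F x) => by
    by_contra! hlt
    linarith [hF.monotone hlt.le, mem_Ioc.1 hu]⟩
  have hne : {x | u ≤ F x}.Nonempty := ⟨t₁, hu.2.trans ht₁.ge⟩
  rw [genInv, if_neg hu.1.ne']
  refine ⟨fun h => ?_, fun h => csInf_le hbdd h⟩
  exact (isClosed_le continuous_const hF.continuous).csInf_mem hne hbdd |>.trans (hF.monotone h)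

lemma apply_genInv (hF : IsContinuousCDFOfBoundedSupport F) (hu : u ∈ Ioc 0 1) :
    F (genInv F u) = u := by
  have hiff := genInv_le_iff hF hu
  refine le_antisymm ?_ ((hiff _).1 le_rfl)
  refine le_of_tendsto (hF.continuous.tendsto _ |>.mono_left nhdsWithin_le_nhds)
    (eventually_nhdsWithin_of_forall (s := Iio (genInv F u)) fun t ht => ?_)
  exact (lt_of_not_ge fun h => ((hiff t).2 h).not_gt ht).le

end genInv

def rampBetween (a b u : ℝ) : ℝ :=
  if u ≤ a then 0 else if b ≤ u then 1 else (u - a) / (b - a)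

section rampBetween

variable {a b u : ℝ}

lemma rampBetween_eq_of_mem_Icc (hu : u ∈ Icc a b) : rampBetween a b u = (u - a) / (b - a) := by
  rw [rampBetween]
  split_ifs with ha hb
  · rw [le_antisymm ha hu.1, sub_self, zero_div]
  · rw [le_antisymm hu.2 hb, div_self (by linarith [hu.2])]
  · rfl

lemma monotone_rampBetween (a b : ℝ) : Monotone (rampBetween a b) := by
  intro u v huv
  simp only [rampBetween]
  split_ifs <;> first
    | rfl | linarith | exact zero_le_one
    | exact div_nonneg (by linarith) (by linarith)
    | exact (div_le_one (by linarith)).2 (by linarith)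
    | exact div_le_div_of_nonneg_right (by linarith) (by linarith)

lemma integral_rampBetween (ha : 0 ≤ a) (hab : a ≤ b) (hb : b ≤ 1) :
    ∫ u in (0:ℝ)..1, rampBetween a b u = 1 - (a + b) / 2 := by
  have hint : ∀ p q, IntervalIntegrable (rampBetween a b) volume p q := fun _ _ =>
    (monotone_rampBetween a b).intervalIntegrable
  rw [← intervalIntegral.integral_add_adjacent_intervals (hint 0 a) (hint a 1),
    ← intervalIntegral.integral_add_adjacent_intervals (hint a b) (hint b 1)]
  have h0a : ∫ u in (0:ℝ)..a, rampBetween a b u = 0 := by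
    have hzero : EqOn (rampBetween a b) (fun _ => 0) (uIcc 0 a) := fun u hu =>
      if_pos (uIcc_of_le ha ▸ hu).2
    simp [intervalIntegral.integral_congr hzero]
  have hab' : ∫ u in a..b, rampBetween a b u = (b - a) / 2 := by
    rw [intervalIntegral.integral_congr fun u hu =>
      rampBetween_eq_of_mem_Icc (uIcc_of_le hab ▸ hu)]
    rcases hab.eq_or_lt with rfl | hlt
    · simp
    · rw [intervalIntegral.integral_div, intervalIntegral.integral_comp_sub_right (fun u => u),
        integral_id]
      field_simp
      ring
  have hb1 : ∫ u in b..1, rampBetween a b u = 1 - b := by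
    have hone : ∀ u ∈ uIoc b 1, rampBetween a b u = 1 := fun u hu => by
      have hbu : b < u := (uIoc_of_le hb ▸ hu).1
      rw [rampBetween, if_neg (by linarith), if_pos hbu.le]
    simp [intervalIntegral.integral_congr_ae (ae_of_all _ hone)]
  rw [h0a, hab', hb1]
  ring

end rampBetween

def ramp (c s : ℝ) : ℝ := min 1 (max 0 (s + 1 - c))

section ramp

variable {c s : ℝ}

lemma monotone_ramp (c : ℝ) : Monotone (ramp c) := fun _ _ h =>
  min_le_min le_rfl (max_le_max le_rfl (by linarith))

lemma continuous_ramp (c : ℝ) : Continuous (ramp c) := by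
  unfold ramp
  fun_prop

lemma ramp_nonneg (c s : ℝ) : 0 ≤ ramp c s := le_min zero_le_one (le_max_left _ _)

lemma ramp_le_one (c s : ℝ) : ramp c s ≤ 1 := min_le_left _ _

lemma ramp_eq_zero (h : s ≤ c - 1) : ramp c s = 0 := by
  rw [ramp, max_eq_left (by linarith), min_eq_right zero_le_one]

lemma ramp_eq_one (h : c ≤ s) : ramp c s = 1 := by
  rw [ramp, max_eq_right (by linarith), min_eq_left (by linarith)]

lemma ramp_eq_of_mem_Icc (h : s ∈ Icc (c - 1) c) : ramp c s = s + 1 - c := by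
  rw [ramp, max_eq_right (by linarith [h.1]), min_eq_right (by linarith [h.2])]

lemma ramp_natCast_sub_one (c k : ℕ) : ramp c ((k : ℝ) - 1) = if c < k then 1 else 0 := by
  split_ifs with h
  · exact ramp_eq_one (by linarith [show (c : ℝ) + 1 ≤ k by exact_mod_cast h])
  · exact ramp_eq_zero (by linarith [show (k : ℝ) ≤ c by exact_mod_cast not_lt.1 h])

lemma ramp_natCast (c k : ℕ) : ramp c k = if c ≤ k then 1 else 0 := by
  split_ifs with h
  · exact ramp_eq_one (by exact_mod_cast h)
  · exact ramp_eq_zero (by linarith [show (k : ℝ) + 1 ≤ c by exact_mod_cast not_le.1 h])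

lemma ramp_natCast_affine (c k : ℕ) (hs : s ∈ Icc ((k : ℝ) - 1) k) :
    ramp c s = ramp c ((k : ℝ) - 1) + (s - (k - 1)) * (ramp c k - ramp c ((k : ℝ) - 1)) := by
  rw [ramp_natCast_sub_one, ramp_natCast]
  rcases lt_trichotomy c k with h | rfl | h
  · rw [ramp_eq_one (by linarith [hs.1, show (c : ℝ) + 1 ≤ k by exact_mod_cast h]),
      if_pos h, if_pos h.le]
    ring
  · rw [ramp_eq_of_mem_Icc hs, if_neg (lt_irrefl c), if_pos le_rfl]
    ring
  · rw [ramp_eq_zero (by linarith [hs.2, show (k : ℝ) + 1 ≤ c by exact_mod_cast h]),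
      if_neg (not_lt.2 h.le), if_neg (not_le.2 h)]
    ring

lemma setIntegral_Icc_indicator_add (c s : ℝ) :
    ∫ t in Icc (0:ℝ) 1, (if c ≤ s + t then (1:ℝ) else 0) = ramp c s := by
  have hind :
      (fun t => if c ≤ s + t then (1:ℝ) else 0) = (Ici (c - s)).indicator fun _ => 1 := by
    ext t
    simp only [indicator_apply, mem_Ici, sub_le_iff_le_add']
  have hIcc : Icc 0 1 ∩ Ici (c - s) = Icc (max 0 (c - s)) 1 := by
    ext t
    simp only [mem_inter_iff, mem_Icc, mem_Ici, max_le_iff]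
    tauto
  rw [hind, setIntegral_indicator measurableSet_Ici, hIcc, setIntegral_const,
    smul_eq_mul, mul_one, Real.volume_real_Icc, ramp]
  simp only [max_def, min_def]
  split_ifs <;> linarith

lemma integrableOn_Icc_indicator_add (c s : ℝ) :
    IntegrableOn (fun t => if c ≤ s + t then (1:ℝ) else 0) (Icc 0 1) := by
  have hmono : Monotone fun t => if c ≤ s + t then (1:ℝ) else 0 := fun a b hab => by
    dsimp only
    split_ifs <;> first | rfl | linarith
  exact hmono.locallyIntegrable.integrableOn_isCompact isCompact_Icc

end ramp

section rampGenInv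

variable {F : ℝ → ℝ} {k : ℝ}

lemma ramp_eq_rampBetween (hF : Monotone F)
    (haff : ∀ s ∈ Icc (k - 1) k, F s = F (k - 1) + (s - (k - 1)) * (F k - F (k - 1)))
    {s : ℝ} (ha : F s ≠ F (k - 1)) (hb : F s ≠ F k) :
    ramp k s = rampBetween (F (k - 1)) (F k) (F s) := by
  rcases ha.lt_or_gt with ha | ha
  · rw [ramp_eq_zero (hF.reflect_lt ha).le, rampBetween, if_pos ha.le]
  rcases hb.lt_or_gt with hb | hb
  · have hs : s ∈ Icc (k - 1) k := ⟨(hF.reflect_lt ha).le, (hF.reflect_lt hb).le⟩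
    have hab : 0 < F k - F (k - 1) := by linarith
    rw [ramp_eq_of_mem_Icc hs, rampBetween, if_neg ha.not_ge, if_neg hb.not_ge, haff s hs]
    field_simp
    ring
  · have hab : F (k - 1) ≤ F k := hF (sub_le_self k zero_le_one)
    rw [ramp_eq_one (hF.reflect_lt hb).le, rampBetween, if_neg (by linarith), if_pos hb.le]

lemma ramp_genInv_ae_eq (hF : IsContinuousCDFOfBoundedSupport F)
    (haff : ∀ s ∈ Icc (k - 1) k, F s = F (k - 1) + (s - (k - 1)) * (F k - F (k - 1))) :
    ∀ᵐ u, u ∈ uIoc (0:ℝ) 1 → ramp k (genInv F u) = rampBetween (F (k - 1)) (F k) u := by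
  filter_upwards [volume.ae_ne (F (k - 1)), volume.ae_ne (F k)] with u ha hb hu
  have hFu := apply_genInv hF (uIoc_of_le (zero_le_one (α := ℝ)) ▸ hu)
  rw [ramp_eq_rampBetween hF.monotone haff (hFu.symm ▸ ha) (hFu.symm ▸ hb), hFu]

lemma intervalIntegrable_ramp_genInv (hF : IsContinuousCDFOfBoundedSupport F)
    (haff : ∀ s ∈ Icc (k - 1) k, F s = F (k - 1) + (s - (k - 1)) * (F k - F (k - 1))) :
    IntervalIntegrable (fun u => ramp k (genInv F u)) volume 0 1 :=
  (monotone_rampBetween _ _).intervalIntegrable.congr_ae <|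
    (ae_restrict_iff' measurableSet_uIoc).2 <|
      (ramp_genInv_ae_eq hF haff).mono fun _ h hu => (h hu).symm

lemma integral_ramp_genInv (hF : IsContinuousCDFOfBoundedSupport F)
    (haff : ∀ s ∈ Icc (k - 1) k, F s = F (k - 1) + (s - (k - 1)) * (F k - F (k - 1))) :
    ∫ u in (0:ℝ)..1, ramp k (genInv F u) = 1 - (F (k - 1) + F k) / 2 := by
  rw [intervalIntegral.integral_congr_ae (ramp_genInv_ae_eq hF haff),
    integral_rampBetween (hF.nonneg _) (hF.monotone (sub_le_self k zero_le_one)) (hF.le_one _)]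

end rampGenInv

def avgRamp (n : ℕ) (c : Fin n → ℕ) (t : ℝ) : ℝ := (n : ℝ)⁻¹ * ∑ m, ramp (c m) t

section avgRamp

variable {n : ℕ} (c : Fin n → ℕ)

lemma avgRamp_affine (k : ℕ) {s : ℝ} (hs : s ∈ Icc ((k : ℝ) - 1) k) :
    avgRamp n c s = avgRamp n c ((k : ℝ) - 1)
      + (s - (k - 1)) * (avgRamp n c k - avgRamp n c ((k : ℝ) - 1)) := by
  simp only [avgRamp, ← mul_sub, ← Finset.sum_sub_distrib, Finset.mul_sum,
    ← Finset.sum_add_distrib]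
  refine Finset.sum_congr rfl fun m _ => ?_
  rw [ramp_natCast_affine (c m) k hs]
  ring

lemma avgRamp_le_one (t : ℝ) : avgRamp n c t ≤ 1 := by
  calc avgRamp n c t ≤ (n : ℝ)⁻¹ * ∑ _m : Fin n, 1 :=
        mul_le_mul_of_nonneg_left (Finset.sum_le_sum fun m _ => ramp_le_one _ _) (by positivity)
    _ ≤ 1 := by
        rw [Finset.sum_const, Finset.card_univ, Fintype.card_fin, nsmul_one]
        exact inv_mul_le_one_of_le₀ le_rfl (Nat.cast_nonneg n)

lemma isContinuousCDFOfBoundedSupport_avgRamp (hn : 0 < n) :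
    IsContinuousCDFOfBoundedSupport (avgRamp n c) where
  monotone _ _ h :=
    mul_le_mul_of_nonneg_left (Finset.sum_le_sum fun m _ => monotone_ramp _ h) (by positivity)
  continuous := continuous_const.mul (continuous_finsetSum _ fun _ _ => continuous_ramp _)
  nonneg _ := mul_nonneg (by positivity) (Finset.sum_nonneg fun m _ => ramp_nonneg _ _)
  le_one := avgRamp_le_one c
  exists_eq_zero := ⟨-1, by
    rw [avgRamp, Finset.sum_eq_zero fun m _ =>
      ramp_eq_zero (by linarith [(c m).cast_nonneg (α := ℝ)]), mul_zero]⟩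
  exists_eq_one := ⟨(Finset.univ.sup c : ℕ), by
    rw [avgRamp, Finset.sum_congr rfl fun m _ =>
      ramp_eq_one (by exact_mod_cast Finset.le_sup (Finset.mem_univ m)), Finset.sum_const,
      Finset.card_univ, Fintype.card_fin, nsmul_one, inv_mul_cancel₀ (by positivity)]⟩

end avgRamp

lemma setIntegral_Icc_pi_prod {ι : Type*} [Fintype ι] (f : ι → ℝ → ℝ) :
    ∫ u in Icc (0 : ι → ℝ) 1, ∏ j, f j (u j) = ∏ j, ∫ t in Icc (0:ℝ) 1, f j t := by
  rw [← pi_univ_Icc, volume_pi, Measure.restrict_pi_pi, integral_fintype_prod_eq_prod]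
  rfl

lemma integrableOn_Icc_pi_prod {ι : Type*} [Fintype ι] {f : ι → ℝ → ℝ}
    (hf : ∀ j, IntegrableOn (f j) (Icc 0 1)) :
    IntegrableOn (fun u => ∏ j, f j (u j)) (Icc (0 : ι → ℝ) 1) := by
  rw [IntegrableOn, ← pi_univ_Icc, volume_pi, Measure.restrict_pi_pi]
  exact Integrable.fintype_prod hf

lemma mlin1_empMargin (d n : ℕ) (x : Fin n → Fin d → ℕ) (j : Fin d) :
    mlin1 (empMargin d n x j) = avgRamp n (fun m => x m j) := by
  funext s
  simp only [mlin1, avgRamp, empMargin]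
  rw [integral_const_mul, integral_finsetSum _ fun m _ => integrableOn_Icc_indicator_add _ _]
  simp_rw [setIntegral_Icc_indicator_add]

lemma mlin_empDF (d n : ℕ) (x : Fin n → Fin d → ℕ) (y : Fin d → ℝ) :
    mlin d (empDF d n x) y = (n : ℝ)⁻¹ * ∑ i, ∏ j, ramp (x i j) (y j) := by
  have hprod : ∀ z, empDF d n x z
      = (n : ℝ)⁻¹ * ∑ i, ∏ j, if (x i j : ℝ) ≤ z j then (1:ℝ) else 0 := fun z => by
    rw [empDF]
    congr 1
    exact Finset.sum_congr rfl fun i _ => by rw [Fintype.prod_boole]; congr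
  simp only [mlin, hprod, Pi.add_apply]
  rw [integral_const_mul, integral_finsetSum _ fun i _ =>
    integrableOn_Icc_pi_prod fun j => integrableOn_Icc_indicator_add _ _]
  congr 1
  refine Finset.sum_congr rfl fun i _ => ?_
  rw [setIntegral_Icc_pi_prod fun j t => if (x i j : ℝ) ≤ y j + t then (1:ℝ) else 0]
  simp_rw [setIntegral_Icc_indicator_add]

lemma mlinCopula_empDF (d n : ℕ) (x : Fin n → Fin d → ℕ) (u : Fin d → ℝ) :
    mlinCopula d (empDF d n x) (empMargin d n x) u
      = (n : ℝ)⁻¹ * ∑ i, ∏ j, ramp (x i j) (genInv (avgRamp n fun m => x m j) (u j)) := by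
  simp only [mlinCopula, mlin_empDF, mlin1_empMargin]

lemma sum_sum_lt_add_half_eq {ι α : Type*} [Fintype ι] [LinearOrder α] (c : ι → α) :
    ∑ i, ∑ m, ((if c m < c i then (1:ℝ) else 0) + (if c m = c i then 1 else 0) / 2)
      = (Fintype.card ι : ℝ) ^ 2 / 2 := by
  set f : ι → ι → ℝ := fun i m =>
    (if c m < c i then 1 else 0) + (if c m = c i then 1 else 0) / 2
  have hswap : ∀ i m, f i m + f m i = 1 := fun i m => by
    simp only [f]
    split_ifs <;> first | (exfalso; order) | norm_num
  have htwice : 2 * ∑ i, ∑ m, f i m = ∑ i, ∑ m, (f i m + f m i) := by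
    rw [two_mul]
    nth_rw 2 [Finset.sum_comm]
    simp only [Finset.sum_add_distrib]
  simp only [hswap, Finset.sum_const, Finset.card_univ, nsmul_eq_mul, mul_one] at htwice
  change ∑ i, ∑ m, f i m = _
  rw [sq]
  linarith

lemma midRank_eq_sum (n : ℕ) (x : Fin n → Fin 2 → ℕ) (i : Fin n) (j : Fin 2) :
    midRank n x i j = 1 / 2
      + ∑ m, ((if x m j < x i j then (1:ℝ) else 0) + (if x m j = x i j then 1 else 0) / 2) := by
  rw [midRank, Finset.natCast_card_filter, Finset.natCast_card_filter, Finset.sum_add_distrib,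
    ← Finset.sum_div]
  ring

lemma sum_midRank_sub (n : ℕ) (x : Fin n → Fin 2 → ℕ) (j : Fin 2) :
    ∑ i, (midRank n x i j - ((n : ℝ) + 1) / 2) = 0 := by
  simp only [midRank_eq_sum]
  rw [Finset.sum_sub_distrib, Finset.sum_add_distrib, sum_sum_lt_add_half_eq fun m => x m j]
  simp only [Finset.sum_const, Finset.card_univ, Fintype.card_fin, nsmul_eq_mul]
  ring

lemma avgRamp_midpoint_eq_midRank (n : ℕ) (x : Fin n → Fin 2 → ℕ) (i : Fin n) (j : Fin 2) :
    (avgRamp n (fun m => x m j) ((x i j : ℝ) - 1) + avgRamp n (fun m => x m j) (x i j)) / 2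
      = (n : ℝ)⁻¹ * (midRank n x i j - 1 / 2) := by
  simp only [avgRamp, midRank_eq_sum, ramp_natCast_sub_one, ramp_natCast, ← mul_add,
    ← Finset.sum_add_distrib, add_sub_cancel_left, Finset.mul_sum, Finset.sum_div]
  refine Finset.sum_congr rfl fun m _ => ?_
  split_ifs <;> first | (exfalso; omega) | ring

lemma integral_ramp_genInv_avgRamp (n : ℕ) (x : Fin n → Fin 2 → ℕ) (i : Fin n) (j : Fin 2) :
    ∫ u in (0:ℝ)..1, ramp (x i j) (genInv (avgRamp n fun m => x m j) u)
      = 1 / 2 - (n : ℝ)⁻¹ * (midRank n x i j - ((n : ℝ) + 1) / 2) := by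
  have hn : (n : ℝ) ≠ 0 := Nat.cast_ne_zero.2 i.pos.ne'
  rw [integral_ramp_genInv (isContinuousCDFOfBoundedSupport_avgRamp _ i.pos)
    (fun _ => avgRamp_affine _ _), avgRamp_midpoint_eq_midRank]
  field_simp
  ring

lemma intervalIntegrable_finsetSum {ι : Type*} [Fintype ι] {f : ι → ℝ → ℝ} {a b : ℝ}
    (hf : ∀ i, IntervalIntegrable (f i) volume a b) :
    IntervalIntegrable (fun x => ∑ i, f i x) volume a b := by
  simpa only [← Finset.sum_apply] using IntervalIntegrable.sum Finset.univ fun i _ => hf i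

lemma integral_integral_sum_mul_sub_mul {ι : Type*} [Fintype ι] {f g : ι → ℝ → ℝ}
    (hf : ∀ i, IntervalIntegrable (f i) volume 0 1)
    (hg : ∀ i, IntervalIntegrable (g i) volume 0 1) :
    ∫ u in (0:ℝ)..1, ∫ v in (0:ℝ)..1, (∑ i, f i u * g i v - u * v)
      = ∑ i, (∫ u in (0:ℝ)..1, f i u) * (∫ v in (0:ℝ)..1, g i v) - 1 / 4 := by
  have hinner : ∀ u, ∫ v in (0:ℝ)..1, (∑ i, f i u * g i v - u * v)
      = ∑ i, f i u * (∫ v in (0:ℝ)..1, g i v) - u / 2 := fun u => by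
    rw [intervalIntegral.integral_sub (intervalIntegrable_finsetSum fun i => (hg i).const_mul _)
      ((continuous_const_mul u).intervalIntegrable 0 1),
      intervalIntegral.integral_finsetSum fun i _ => (hg i).const_mul _,
      intervalIntegral.integral_const_mul, integral_id]
    simp only [intervalIntegral.integral_const_mul]
    ring
  simp_rw [hinner]
  rw [intervalIntegral.integral_sub (intervalIntegrable_finsetSum fun i => (hf i).mul_const _)
    ((by fun_prop : Continuous fun u : ℝ => u / 2).intervalIntegrable 0 1),
    intervalIntegral.integral_finsetSum fun i _ => (hf i).mul_const _,
    intervalIntegral.integral_div, integral_id]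
  simp only [intervalIntegral.integral_mul_const]
  ring

lemma sum_half_sub_mul_half_sub {ι : Type*} [Fintype ι] {a b : ι → ℝ} (ha : ∑ i, a i = 0)
    (hb : ∑ i, b i = 0) (t : ℝ) :
    ∑ i, (1 / 2 - t * a i) * (1 / 2 - t * b i)
      = Fintype.card ι / 4 + t ^ 2 * ∑ i, a i * b i := by
  have hexpand : ∀ i, (1 / 2 - t * a i) * (1 / 2 - t * b i)
      = 1 / 4 - t / 2 * a i - t / 2 * b i + t ^ 2 * (a i * b i) := fun i => by ring
  simp only [hexpand, Finset.sum_add_distrib, Finset.sum_sub_distrib, ← Finset.mul_sum, ha, hb,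
    Finset.sum_const, Finset.card_univ, nsmul_eq_mul]
  ring

/-- Spearman's rho statistic based on mid-ranks admits the copula
representation `ρ_n = (12/n³) ∑_i (R_{i1} − (n+1)/2)(R_{i2} − (n+1)/2)
= 12 ∫₀¹∫₀¹ {Ĉ_n^⊞(u,v) − uv} dv du`. -/
theorem spearman_rho_copula_representation
    (n : ℕ) (hn : 0 < n) (x : Fin n → Fin 2 → ℕ) :
    (12 / (n : ℝ) ^ 3)
        * ∑ i : Fin n,
            (midRank n x i 0 - ((n : ℝ) + 1) / 2) * (midRank n x i 1 - ((n : ℝ) + 1) / 2)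
      = 12 * ∫ u in (0:ℝ)..1, ∫ v in (0:ℝ)..1,
          (mlinCopula 2 (empDF 2 n x) (empMargin 2 n x) ![u, v] - u * v) := by
  set Q : Fin 2 → ℝ → ℝ := fun j => genInv (avgRamp n fun m => x m j)
  have hcopula : ∀ u v, mlinCopula 2 (empDF 2 n x) (empMargin 2 n x) ![u, v]
      = ∑ i, ((n : ℝ)⁻¹ * ramp (x i 0) (Q 0 u)) * ramp (x i 1) (Q 1 v) := fun u v => by
    simp [mlinCopula_empDF, Finset.mul_sum, Fin.prod_univ_two, mul_assoc, Q]
  have hint : ∀ i j, IntervalIntegrable (fun u => ramp (x i j) (Q j u)) volume 0 1 := fun i j =>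
    intervalIntegrable_ramp_genInv (isContinuousCDFOfBoundedSupport_avgRamp _ hn)
      fun _ => avgRamp_affine _ _
  simp_rw [hcopula]
  rw [integral_integral_sum_mul_sub_mul (fun i => (hint i 0).const_mul _) (hint · 1)]
  simp only [intervalIntegral.integral_const_mul, Q, integral_ramp_genInv_avgRamp, mul_assoc,
    ← Finset.mul_sum]
  rw [sum_half_sub_mul_half_sub (sum_midRank_sub n x 0) (sum_midRank_sub n x 1),
    Fintype.card_fin]
  generalize ∑ i, (midRank n x i 0 - ((n : ℝ) + 1) / 2) * (midRank n x i 1 - ((n : ℝ) + 1) / 2)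
    = S
  field_simp
  ring
end
end
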